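/- arXiv:1007.1775 — 9 statements merged into one kernel-verified Lean document; each statement's English description precedes it below -/
import Mathlib

section
/- For the ternary Maxwell-Stefan matrix B, det B ≥ min{1/(Đ₁₂Đ₁₃), 1/(Đ₁₂Đ₂₃), 1/(Đ₁₃Đ₂₃)} > 0; in particular B is invertible for every composition vector. -/
/-!
With `a = 1/Đ₁₂`, `b = 1/Đ₁₃`, `c = 1/Đ₂₃`, the determinant of the ternary Maxwell–Stefan matrix
is the convex combination `x₁ a b + x₂ a c + x₃ b c` of the three pairwise products, so it is
at least their minimum, which is positive.
-/

theorem det_ternaryMaxwellStefan {R : Type*} [CommRing R] (a b c x₁ x₂ : R) :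
    !![b + x₂ * (a - b), -x₁ * (a - b); -x₂ * (a - c), c + x₁ * (a - c)].det
      = x₁ * (a * b) + x₂ * (a * c) + (1 - x₁ - x₂) * (b * c) := by
  rw [Matrix.det_fin_two_of]
  ring

theorem min_le_convex_combination {𝕜 : Type*} [Field 𝕜] [LinearOrder 𝕜]
    [IsStrictOrderedRing 𝕜] {x₁ x₂ : 𝕜} (hx₁ : 0 ≤ x₁) (hx₂ : 0 ≤ x₂) (hsum : x₁ + x₂ ≤ 1)
    (p q r : 𝕜) : min (min p q) r ≤ x₁ * p + x₂ * q + (1 - x₁ - x₂) * r := by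
  have hx₃ : 0 ≤ 1 - x₁ - x₂ := by linarith
  have hp : min (min p q) r ≤ p := (min_le_left _ _).trans (min_le_left _ _)
  have hq : min (min p q) r ≤ q := (min_le_left _ _).trans (min_le_right _ _)
  have hr : min (min p q) r ≤ r := min_le_right _ _
  linarith [mul_le_mul_of_nonneg_left hp hx₁, mul_le_mul_of_nonneg_left hq hx₂,
    mul_le_mul_of_nonneg_left hr hx₃]

theorem ternary_MS_det_lower_bound_invertible
    (D12 D13 D23 x1 x2 : ℝ)
    (hD12 : 0 < D12) (hD13 : 0 < D13) (hD23 : 0 < D23)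
    (hx1 : 0 ≤ x1) (hx2 : 0 ≤ x2) (hsum : x1 + x2 ≤ 1)
    (B : Matrix (Fin 2) (Fin 2) ℝ)
    (hB : B = !![1/D13 + x2*(1/D12 - 1/D13), -x1*(1/D12 - 1/D13);
                 -x2*(1/D12 - 1/D23), 1/D23 + x1*(1/D12 - 1/D23)]) :
    B.det ≥ min (min (1/(D12*D13)) (1/(D12*D23))) (1/(D13*D23))
    ∧ 0 < min (min (1/(D12*D13)) (1/(D12*D23))) (1/(D13*D23))
    ∧ IsUnit B := by
  have hdet : B.det = x1 * (1/(D12*D13)) + x2 * (1/(D12*D23))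
      + (1 - x1 - x2) * (1/(D13*D23)) := by
    simp only [hB, det_ternaryMaxwellStefan, one_div_mul_one_div]
  have hge : min (min (1/(D12*D13)) (1/(D12*D23))) (1/(D13*D23)) ≤ B.det :=
    hdet ▸ min_le_convex_combination hx1 hx2 hsum _ _ _
  have hpos : 0 < min (min (1/(D12*D13)) (1/(D12*D23))) (1/(D13*D23)) := by positivity
  refine ⟨hge, hpos, ?_⟩
  rw [Matrix.isUnit_iff_isUnit_det]
  exact (hpos.trans_le hge).ne'.isUnit
end

section
/- For the ternary Maxwell-Stefan matrix B, one has (tr B)² ≥ 3 · det B. Consequently the eigenvalues of B are real or lie in a sector of half-angle less than π/6 about the positive real axis. -/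
/-!
The discriminant `tr² - 4 det` of the ternary Maxwell–Stefan matrix is a sum of nonnegative
terms once the sign of `(a - b)(a - c)` is fixed, so its eigenvalues are real; and
`tr² ≥ 4 det ≥ 3 det` as soon as `det ≥ 0`, the case `det < 0` being trivial.
-/

open Polynomial

lemma Complex.im_eq_zero_of_quadratic_eq_zero {t d : ℝ} (hdisc : 0 ≤ t ^ 2 - 4 * d) {z : ℂ}
    (hz : z ^ 2 - t * z + d = 0) : z.im = 0 := by
  set s : ℂ := ((√(t ^ 2 - 4 * d) : ℝ) : ℂ)
  have hs : discrim 1 (-(t : ℂ)) d = s * s := by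
    rw [discrim, ← Complex.ofReal_mul, Real.mul_self_sqrt hdisc]
    push_cast
    ring
  have hz' : 1 * (z * z) + -(t : ℂ) * z + d = 0 := by linear_combination hz
  rcases (quadratic_eq_zero_iff one_ne_zero hs z).mp hz' with rfl | rfl <;> simp [s]

lemma Matrix.im_eq_zero_of_isRoot_charpoly_map_ofReal (M : Matrix (Fin 2) (Fin 2) ℝ)
    (hM : 0 ≤ M.discr) {z : ℂ} (hz : (M.map Complex.ofReal).charpoly.IsRoot z) : z.im = 0 := by
  rw [M.discr_fin_two] at hM
  rw [IsRoot, Matrix.charpoly_fin_two] at hz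
  refine Complex.im_eq_zero_of_quadratic_eq_zero hM ?_
  simpa [Matrix.trace_fin_two, Matrix.det_fin_two] using hz

/-- The ternary Maxwell–Stefan matrix, written in the inverse diffusivities
`a = 1/Đ₁₂`, `b = 1/Đ₁₃`, `c = 1/Đ₂₃`. -/
def ternaryMSMatrix (a b c x₁ x₂ : ℝ) : Matrix (Fin 2) (Fin 2) ℝ :=
  !![b + x₂ * (a - b), -x₁ * (a - b); -x₂ * (a - c), c + x₁ * (a - c)]

/-- With `p = a - b`, `q = a - c`, the discriminant is
`(q(1-x₁) - p(1-x₂))² + 4x₁x₂pq = (q(1-x₁) + p(1-x₂))² - 4(1-x₁-x₂)pq`;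
the first form is nonnegative when `pq ≥ 0`, the second when `pq ≤ 0`. -/
lemma discr_ternaryMSMatrix_nonneg (a b c : ℝ) {x₁ x₂ : ℝ} (hx₁ : 0 ≤ x₁) (hx₂ : 0 ≤ x₂)
    (hx : x₁ + x₂ ≤ 1) : 0 ≤ (ternaryMSMatrix a b c x₁ x₂).discr := by
  set p := a - b
  set q := a - c
  have hdiscr : (ternaryMSMatrix a b c x₁ x₂).discr
      = (q * (1 - x₁) - p * (1 - x₂)) ^ 2 + 4 * (x₁ * x₂) * (p * q) := by
    rw [Matrix.discr_fin_two, Matrix.trace_fin_two, Matrix.det_fin_two, ternaryMSMatrix]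
    simp only [Matrix.of_apply, Matrix.cons_val', Matrix.cons_val_zero, Matrix.cons_val_one,
      Matrix.empty_val', Matrix.cons_val_fin_one]
    ring
  rcases le_total 0 (p * q) with hpq | hpq
  · rw [hdiscr]
    positivity
  · have hdiscr' : (ternaryMSMatrix a b c x₁ x₂).discr
        = (q * (1 - x₁) + p * (1 - x₂)) ^ 2 - 4 * (1 - x₁ - x₂) * (p * q) := by
      rw [hdiscr]; ring
    rw [hdiscr']
    nlinarith [sq_nonneg (q * (1 - x₁) + p * (1 - x₂))]

theorem ternary_MS_trace_sq_ge_three_det_general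
    (D12 D13 D23 x1 x2 : ℝ)
    (hx1 : 0 ≤ x1) (hx2 : 0 ≤ x2) (hsum : x1 + x2 ≤ 1)
    (B : Matrix (Fin 2) (Fin 2) ℝ)
    (hB : B = !![1/D13 + x2*(1/D12 - 1/D13), -x1*(1/D12 - 1/D13);
                 -x2*(1/D12 - 1/D23), 1/D23 + x1*(1/D12 - 1/D23)]) :
    B.trace ^ 2 ≥ 3 * B.det
    ∧ ∀ lam : ℂ, (B.map (Complex.ofReal)).charpoly.IsRoot lam →
        lam.im = 0 ∨ |lam.arg| < Real.pi / 6 := by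
  have hdiscr : 0 ≤ B.discr := hB ▸ discr_ternaryMSMatrix_nonneg _ _ _ hx1 hx2 hsum
  refine ⟨?_, fun lam hlam ↦ Or.inl (B.im_eq_zero_of_isRoot_charpoly_map_ofReal hdiscr hlam)⟩
  rw [B.discr_fin_two] at hdiscr
  rcases le_total 0 B.det with hdet | hdet <;> nlinarith [sq_nonneg B.trace]

theorem ternary_MS_trace_sq_ge_three_det
    (D12 D13 D23 x1 x2 : ℝ)
    (hD12 : 0 < D12) (hD13 : 0 < D13) (hD23 : 0 < D23)
    (hx1 : 0 ≤ x1) (hx2 : 0 ≤ x2) (hsum : x1 + x2 ≤ 1)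
    (x3 : ℝ) (hx3 : x3 = 1 - x1 - x2)
    (B : Matrix (Fin 2) (Fin 2) ℝ)
    (hB : B = !![1/D13 + x2*(1/D12 - 1/D13), -x1*(1/D12 - 1/D13);
                 -x2*(1/D12 - 1/D23), 1/D23 + x1*(1/D12 - 1/D23)]) :
    B.trace ^ 2 ≥ 3 * B.det
    ∧ ∀ lam : ℂ, (B.map (Complex.ofReal)).charpoly.IsRoot lam →
        lam.im = 0 ∨ |lam.arg| < Real.pi / 6 :=
  ternary_MS_trace_sq_ge_three_det_general D12 D13 D23 x1 x2 hx1 hx2 hsum B hB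
end

section
/- The symmetrized Maxwell-Stefan matrix A_S is negative semidefinite: for every v ∈ ℝⁿ, ⟨A_S v, v⟩ ≤ 0, with equality if and only if v is a scalar multiple of √x. -/
/-!
Substituting `v i = √(x i) * w i` turns the quadratic form into
`-½ ∑ i, ∑ j, x i * x j / D i j * (w i - w j) ^ 2`, a weighted Dirichlet energy of `w` with
positive off-diagonal weights. It is therefore `≤ 0`, and it vanishes exactly when `w` is
constant, i.e. when `v` is a multiple of `√x`.
-/

open Finset Matrix

variable {ι : Type*}

lemma exists_mul_eq_smul_iff {s w : ι → ℝ} (hs : ∀ i, s i ≠ 0) :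
    (∃ c : ℝ, (fun i => s i * w i) = c • s) ↔ ∀ i j, w i = w j := by
  have hw : ∀ c, (fun i => s i * w i) = c • s ↔ ∀ i, w i = c := by
    intro c
    simp only [funext_iff, Pi.smul_apply, smul_eq_mul, mul_comm c, mul_right_inj' (hs _)]
  simp only [hw]
  refine ⟨fun ⟨c, hc⟩ i j => (hc i).trans (hc j).symm, fun h => ?_⟩
  rcases isEmpty_or_nonempty ι with hι | ⟨⟨i₀⟩⟩
  · exact ⟨0, isEmptyElim⟩
  · exact ⟨w i₀, fun i => h i i₀⟩

variable [Fintype ι]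

def dirichletEnergy (c : ι → ι → ℝ) (w : ι → ℝ) : ℝ :=
  ∑ i, ∑ j, c i j * (w i - w j) ^ 2

lemma dirichletEnergy_nonneg {c : ι → ι → ℝ} (hc : ∀ i j, i ≠ j → 0 ≤ c i j) (w : ι → ℝ) :
    0 ≤ dirichletEnergy c w := by
  refine sum_nonneg fun i _ => sum_nonneg fun j _ => ?_
  rcases eq_or_ne i j with rfl | hij
  · simp
  · exact mul_nonneg (hc i j hij) (sq_nonneg _)

lemma dirichletEnergy_eq_zero_iff {c : ι → ι → ℝ} (hc : ∀ i j, i ≠ j → 0 < c i j)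
    (w : ι → ℝ) : dirichletEnergy c w = 0 ↔ ∀ i j, w i = w j := by
  have hterm : ∀ i j, 0 ≤ c i j * (w i - w j) ^ 2 ∧ (c i j * (w i - w j) ^ 2 = 0 ↔ w i = w j) := by
    intro i j
    rcases eq_or_ne i j with rfl | hij
    · simp
    · simp [(hc i j hij).ne', sub_eq_zero, mul_nonneg (hc i j hij).le (sq_nonneg (w i - w j))]
  simp only [dirichletEnergy,
    sum_eq_zero_iff_of_nonneg (fun i _ => sum_nonneg fun j _ => (hterm i j).1),
    sum_eq_zero_iff_of_nonneg (fun j _ => (hterm _ j).1), mem_univ, true_imp_iff, (hterm _ _).2]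

lemma sum_mul_mul_sub_sq_eq_neg_half_dirichletEnergy {c : ι → ι → ℝ}
    (hc : ∀ i j, c i j = c j i) (w : ι → ℝ) :
    ∑ i, ∑ j, c i j * (w i * w j - w i ^ 2) = -dirichletEnergy c w / 2 := by
  have hswap : ∑ i, ∑ j, c i j * w j ^ 2 = ∑ i, ∑ j, c i j * w i ^ 2 := by
    rw [sum_comm]
    simp only [hc]
  calc ∑ i, ∑ j, c i j * (w i * w j - w i ^ 2)
      = ∑ i, ∑ j, (-(c i j * (w i - w j) ^ 2) / 2 + (c i j * w j ^ 2 - c i j * w i ^ 2) / 2) := by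
        congr! 2; ring
    _ = -dirichletEnergy c w / 2 + (∑ i, ∑ j, c i j * w j ^ 2 - ∑ i, ∑ j, c i j * w i ^ 2) / 2 := by
        simp only [dirichletEnergy, sum_add_distrib, sum_sub_distrib, ← sum_div, sum_neg_distrib]
    _ = -dirichletEnergy c w / 2 := by rw [hswap]; ring

lemma dotProduct_mulVec_sqrt_mul_eq [DecidableEq ι] {D : ι → ι → ℝ} {x : ι → ℝ}
    (hx : ∀ i, 0 ≤ x i) {AS : Matrix ι ι ℝ}
    (hAS : ∀ i j, AS i j =
      if i = j then -(∑ k ∈ univ.erase i, x k / D i k) else √(x i * x j) / D i j)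
    (w : ι → ℝ) :
    AS *ᵥ (fun i => √(x i) * w i) ⬝ᵥ (fun i => √(x i) * w i)
      = ∑ i, ∑ j, x i * x j / D i j * (w i * w j - w i ^ 2) := by
  refine sum_congr rfl fun i _ => ?_
  have hsq : ∀ k, √(x k) * √(x k) = x k := fun k => Real.mul_self_sqrt (hx k)
  have hdiag : AS i i * (√(x i) * w i) * (√(x i) * w i)
      = -∑ j ∈ univ.erase i, x i * x j / D i j * w i ^ 2 := by
    rw [hAS, if_pos rfl, neg_mul, neg_mul, sum_mul, sum_mul]
    congr! 2 with j
    linear_combination (x j / D i j * w i ^ 2) * hsq i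
  have hoff : ∀ j ∈ univ.erase i, AS i j * (√(x j) * w j) * (√(x i) * w i)
      = x i * x j / D i j * (w i * w j) := by
    intro j hj
    rw [hAS, if_neg (ne_of_mem_erase hj).symm, Real.sqrt_mul (hx i)]
    linear_combination (w i * w j / D i j) * (√(x j) ^ 2 * hsq i + x i * hsq j)
  -- the `j = i` term on the right vanishes, whatever the junk value `D i i` is
  rw [mulVec, dotProduct, ← add_sum_erase _ _ (mem_univ i), add_mul, hdiag, sum_mul,
    sum_congr rfl hoff, ← sum_erase univ (a := i) (by ring), ← sub_eq_neg_add, ← sum_sub_distrib]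
  simp only [mul_sub]

theorem MS_symmetrized_negative_semidefinite_general
    (n : ℕ)
    (D : Fin n → Fin n → ℝ)
    (hDpos : ∀ i j, i ≠ j → 0 < D i j)
    (hDsymm : ∀ i j, D i j = D j i)
    (x : Fin n → ℝ) (hx : ∀ i, 0 < x i)
    (AS : Matrix (Fin n) (Fin n) ℝ)
    (hAS : ∀ i j, AS i j =
      if i = j then -(∑ k ∈ Finset.univ.erase i, x k / D i k)
      else Real.sqrt (x i * x j) / D i j) :
    ∀ v : Fin n → ℝ,
      dotProduct (AS.mulVec v) v ≤ 0
      ∧ (dotProduct (AS.mulVec v) v = 0 ↔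
          ∃ c : ℝ, v = c • fun i => Real.sqrt (x i)) := by
  intro v
  have hsqrt : ∀ i, √(x i) ≠ 0 := fun i => (Real.sqrt_pos.2 (hx i)).ne'
  obtain ⟨w, rfl⟩ : ∃ w : Fin n → ℝ, v = fun i => √(x i) * w i :=
    ⟨fun i => v i / √(x i), funext fun i => by field_simp [hsqrt i]⟩
  have hc : ∀ i j, i ≠ j → 0 < x i * x j / D i j :=
    fun i j hij => div_pos (mul_pos (hx i) (hx j)) (hDpos i j hij)
  have hcsymm : ∀ i j, x i * x j / D i j = x j * x i / D j i :=
    fun i j => by rw [mul_comm, hDsymm]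
  rw [dotProduct_mulVec_sqrt_mul_eq (fun i => (hx i).le) hAS,
    sum_mul_mul_sub_sq_eq_neg_half_dirichletEnergy hcsymm, exists_mul_eq_smul_iff hsqrt]
  have hE := dirichletEnergy_nonneg (fun i j hij => (hc i j hij).le) w
  refine ⟨by linarith, ?_⟩
  rw [← dirichletEnergy_eq_zero_iff hc]
  constructor <;> intro h <;> linarith

theorem MS_symmetrized_negative_semidefinite
    (n : ℕ) (hn : 2 ≤ n)
    (D : Fin n → Fin n → ℝ)
    (hDpos : ∀ i j, i ≠ j → 0 < D i j)
    (hDsymm : ∀ i j, D i j = D j i)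
    (x : Fin n → ℝ) (hx : ∀ i, 0 < x i) (hxsum : ∑ i, x i = 1)
    (AS : Matrix (Fin n) (Fin n) ℝ)
    (hAS : ∀ i j, AS i j =
      if i = j then -(∑ k ∈ Finset.univ.erase i, x k / D i k)
      else Real.sqrt (x i * x j) / D i j) :
    ∀ v : Fin n → ℝ,
      dotProduct (AS.mulVec v) v ≤ 0
      ∧ (dotProduct (AS.mulVec v) v = 0 ↔
          ∃ c : ℝ, v = c • fun i => Real.sqrt (x i)) :=
  MS_symmetrized_negative_semidefinite_general n D hDpos hDsymm x hx AS hAS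
end

section
/- With δ := min{1/Đ_ij : i ≠ j}, every nonzero eigenvalue λ of the symmetrized Maxwell-Stefan matrix A_S satisfies λ ≤ −δ; i.e. the spectrum of A_S (equivalently of A) is contained in (−∞, −δ] ∪ {0}. -/
/-!
With `w = √x`, the matrix `A_S` annihilates `w` and its quadratic form is
`-½ ∑ᵢ ∑ⱼ (wⱼ vᵢ - wᵢ vⱼ)² / Đᵢⱼ`. An eigenvector `v` of a nonzero eigenvalue `λ` is orthogonal to
`w` by symmetry, so bounding `1 / Đᵢⱼ` below by `δ` and applying Lagrange's identity with
`|w|² = ∑ xᵢ = 1` gives `λ |v|² ≤ -δ |v|²`.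
-/

open Finset Matrix

variable {ι R : Type*} [Fintype ι]

lemma sum_sum_mul_sub_mul_sq [CommRing R] (w v : ι → R) :
    ∑ i, ∑ j, (w j * v i - w i * v j) ^ 2 = 2 * ((w ⬝ᵥ w) * (v ⬝ᵥ v) - (w ⬝ᵥ v) ^ 2) := by
  calc ∑ i, ∑ j, (w j * v i - w i * v j) ^ 2
      = ∑ i, ∑ j, (v i * v i * (w j * w j) + w i * w i * (v j * v j)
          - 2 * (w i * v i) * (w j * v j)) :=
        sum_congr rfl fun i _ => sum_congr rfl fun j _ => by ring
    _ = _ := by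
        simp only [sum_add_distrib, sum_sub_distrib, ← mul_sum, ← sum_mul, dotProduct]
        ring

lemma Matrix.IsSymm.dotProduct_eq_zero_of_mulVec_eq_smul [CommRing R] [NoZeroDivisors R]
    {A : Matrix ι ι R} (hA : A.IsSymm) {u v : ι → R} {μ ν : R} (hu : A *ᵥ u = μ • u)
    (hv : A *ᵥ v = ν • v) (hμν : μ ≠ ν) : u ⬝ᵥ v = 0 := by
  have h : ν * (u ⬝ᵥ v) = μ * (u ⬝ᵥ v) := by
    rw [← smul_eq_mul, ← dotProduct_smul, ← hv, dotProduct_mulVec, ← mulVec_transpose, hA.eq, hu,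
      smul_dotProduct, smul_eq_mul]
  by_contra huv
  exact hμν (mul_right_cancel₀ huv h.symm)

variable [DecidableEq ι]

/-- With `c = 1 / Đ` and `w = √x` this is the symmetrized Maxwell–Stefan matrix `A_S`: the diagonal
correction `c i i * w i ^ 2` cancels the `k = i` term of the sum. -/
def msSymmMatrix [CommRing R] (c : ι → ι → R) (w : ι → R) : Matrix ι ι R :=
  of fun i j => c i j * w i * w j - if i = j then ∑ k, c i k * w k ^ 2 else 0

section CommRing

variable [CommRing R] {c : ι → ι → R} {w : ι → R}

lemma msSymmMatrix_isSymm (hc : ∀ i j, c i j = c j i) : (msSymmMatrix c w).IsSymm :=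
  IsSymm.ext fun i j => by
    by_cases h : i = j
    · rw [h]
    · simp only [msSymmMatrix, of_apply, if_neg h, if_neg (Ne.symm h), hc i j]
      ring

lemma msSymmMatrix_mulVec_self : msSymmMatrix c w *ᵥ w = 0 := by
  ext i
  simp only [msSymmMatrix, mulVec, dotProduct, of_apply, sub_mul, sum_sub_distrib, ite_mul,
    zero_mul, sum_ite_eq, mem_univ, if_true, Pi.zero_apply, sum_mul]
  exact sub_eq_zero.mpr (sum_congr rfl fun k _ => by ring)

lemma two_mul_dotProduct_msSymmMatrix_mulVec (hc : ∀ i j, c i j = c j i) (v : ι → R) :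
    2 * (v ⬝ᵥ msSymmMatrix c w *ᵥ v) = -∑ i, ∑ j, c i j * (w j * v i - w i * v j) ^ 2 := by
  have hswap : ∑ i, ∑ j, c i j * w i ^ 2 * v j ^ 2 = ∑ i, ∑ j, c i j * w j ^ 2 * v i ^ 2 := by
    rw [sum_comm]
    exact sum_congr rfl fun i _ => sum_congr rfl fun j _ => by rw [hc]
  have hquad : v ⬝ᵥ msSymmMatrix c w *ᵥ v
      = ∑ i, ∑ j, c i j * w i * w j * v i * v j - ∑ i, ∑ j, c i j * w j ^ 2 * v i ^ 2 := by
    simp only [msSymmMatrix, mulVec, dotProduct, of_apply, sub_mul, sum_sub_distrib, ite_mul,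
      zero_mul, sum_ite_eq, mem_univ, if_true, mul_sub, mul_sum, sum_mul]
    congr 1 <;> exact sum_congr rfl fun i _ => sum_congr rfl fun j _ => by ring
  have hexpand : ∑ i, ∑ j, c i j * (w j * v i - w i * v j) ^ 2
      = ∑ i, ∑ j, c i j * w j ^ 2 * v i ^ 2 + ∑ i, ∑ j, c i j * w i ^ 2 * v j ^ 2
        - 2 * ∑ i, ∑ j, c i j * w i * w j * v i * v j := by
    simp only [mul_sum, ← sum_add_distrib, ← sum_sub_distrib]
    exact sum_congr rfl fun i _ => sum_congr rfl fun j _ => by ring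
  rw [hquad, hexpand, hswap]
  ring

end CommRing

lemma msSymmMatrix_eigenvalue_le_neg [Field R] [LinearOrder R] [IsStrictOrderedRing R]
    {c : ι → ι → R} {w v : ι → R} {δ lam : R} (hc : ∀ i j, c i j = c j i)
    (hδ : ∀ i j, i ≠ j → δ ≤ c i j) (hw : w ⬝ᵥ w = 1) (hv : v ≠ 0)
    (hev : msSymmMatrix c w *ᵥ v = lam • v) (hlam : lam ≠ 0) : lam ≤ -δ := by
  have horth : w ⬝ᵥ v = 0 :=
    (msSymmMatrix_isSymm hc).dotProduct_eq_zero_of_mulVec_eq_smul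
      (msSymmMatrix_mulVec_self.trans (zero_smul R w).symm) hev (Ne.symm hlam)
  have hweights : ∑ i, ∑ j, δ * (w j * v i - w i * v j) ^ 2
      ≤ ∑ i, ∑ j, c i j * (w j * v i - w i * v j) ^ 2 := by
    refine sum_le_sum fun i _ => sum_le_sum fun j _ => ?_
    by_cases h : i = j
    · simp [h]
    · exact mul_le_mul_of_nonneg_right (hδ i j h) (sq_nonneg _)
  have hnorm : 0 < v ⬝ᵥ v := (Fintype.sum_nonneg fun i => mul_self_nonneg (v i)).lt_of_ne
    (Ne.symm (dotProduct_self_eq_zero.not.mpr hv))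
  have hform : 2 * (lam * (v ⬝ᵥ v)) ≤ 2 * (-δ * (v ⬝ᵥ v)) := by
    rw [← smul_eq_mul lam, ← dotProduct_smul, ← hev, two_mul_dotProduct_msSymmMatrix_mulVec hc]
    simp only [← mul_sum, sum_sum_mul_sub_mul_sq, hw, horth] at hweights
    linarith
  exact le_of_mul_le_mul_right (by linarith) hnorm

lemma msSymmMatrix_one_div_sqrt_apply {D : ι → ι → ℝ} {x : ι → ℝ} (hx : ∀ i, 0 ≤ x i) (i j : ι) :
    msSymmMatrix (fun i j => 1 / D i j) (fun i => √(x i)) i j =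
      if i = j then -(∑ k ∈ univ.erase i, x k / D i k) else √(x i * x j) / D i j := by
  simp only [msSymmMatrix, of_apply, Real.sq_sqrt (hx _)]
  split_ifs with h
  · subst h
    rw [← add_sum_erase _ _ (mem_univ i), mul_assoc, Real.mul_self_sqrt (hx i)]
    simp only [one_div_mul_eq_div]
    ring
  · rw [Real.sqrt_mul (hx i)]
    ring

theorem MS_symmetrized_spectral_gap_general
    (n : ℕ)
    (D : Fin n → Fin n → ℝ)
    (hDsymm : ∀ i j, D i j = D j i)
    (x : Fin n → ℝ) (hx : ∀ i, 0 < x i) (hxsum : ∑ i, x i = 1)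
    (δ : ℝ) (hδ : IsLeast {r : ℝ | ∃ i j : Fin n, i ≠ j ∧ r = 1 / D i j} δ)
    (AS : Matrix (Fin n) (Fin n) ℝ)
    (hAS : ∀ i j, AS i j =
      if i = j then -(∑ k ∈ Finset.univ.erase i, x k / D i k)
      else Real.sqrt (x i * x j) / D i j) :
    ∀ lam : ℝ, (∃ v : Fin n → ℝ, v ≠ 0 ∧ AS.mulVec v = lam • v) →
      lam = 0 ∨ lam ≤ -δ := by
  rintro lam ⟨v, hv, hev⟩
  have hx0 : ∀ i, 0 ≤ x i := fun i => (hx i).le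
  have hAS_eq : AS = msSymmMatrix (fun i j => 1 / D i j) (fun i => √(x i)) := by
    ext i j
    rw [hAS, msSymmMatrix_one_div_sqrt_apply hx0]
  have hw : (fun i => √(x i)) ⬝ᵥ (fun i => √(x i)) = 1 := by
    simpa only [dotProduct, Real.mul_self_sqrt (hx0 _)] using hxsum
  rw [or_iff_not_imp_left]
  exact msSymmMatrix_eigenvalue_le_neg (fun i j => by rw [hDsymm])
    (fun i j hij => hδ.2 ⟨i, j, hij, rfl⟩) hw hv (hAS_eq ▸ hev)

theorem MS_symmetrized_spectral_gap
    (n : ℕ) (hn : 2 ≤ n)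
    (D : Fin n → Fin n → ℝ)
    (hDpos : ∀ i j, i ≠ j → 0 < D i j)
    (hDsymm : ∀ i j, D i j = D j i)
    (x : Fin n → ℝ) (hx : ∀ i, 0 < x i) (hxsum : ∑ i, x i = 1)
    (δ : ℝ) (hδ : IsLeast {r : ℝ | ∃ i j : Fin n, i ≠ j ∧ r = 1 / D i j} δ)
    (AS : Matrix (Fin n) (Fin n) ℝ)
    (hAS : ∀ i j, AS i j =
      if i = j then -(∑ k ∈ Finset.univ.erase i, x k / D i k)
      else Real.sqrt (x i * x j) / D i j) :
    ∀ lam : ℝ, (∃ v : Fin n → ℝ, v ≠ 0 ∧ AS.mulVec v = lam • v) →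
      lam = 0 ∨ lam ≤ -δ :=
  MS_symmetrized_spectral_gap_general n D hDsymm x hx hxsum δ hδ AS hAS
end

section
/- For each α with 0 ≤ α < δ := min{1/Đ_ij : i ≠ j}, the rank-one perturbation A_S(α) := A_S − α √x ⊗ √x is quasi-positive and irreducible, √x is a positive eigenvector of A_S(α) with eigenvalue −α, and the nonzero spectrum of A_S coincides with σ(A_S(α)) \ {−α}. -/
/-!
With `s = √x` and `C i j = 1 / Đ i j`, the matrix `A_S` is `S C S - diag (C (s * s))`, `S = diag s`.
It is symmetric, annihilates `s`, and has quadratic form `-½ ∑ C i j (s j v i - s i v j)²`; by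
Lagrange's identity this is at most `-δ ‖v‖²` on the orthogonal complement of the unit vector `s`.
Subtracting `α s sᵀ` turns the eigenvalue `0` at `s` into `-α` and does not change the matrix on
`s^⊥`. By symmetry every eigenvector for another eigenvalue lies in `s^⊥`, so both matrices have
the same eigenvalues there, and these are all `≤ -δ < -α`.
-/

open Matrix Finset

namespace Matrix

section RankOnePerturbation

variable {ι K : Type*} [Field K] {A : Matrix ι ι K} {u v : ι → K} {α μ lam : K}

theorem IsSymm.sub_smul_vecMulVec_self (hA : A.IsSymm) (α : K) (u : ι → K) :
    (A - α • vecMulVec u u).IsSymm :=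
  hA.sub ((IsSymm.ext fun i j => mul_comm (u j) (u i) : (vecMulVec u u).IsSymm).smul α)

variable [Fintype ι]

theorem IsSymm.dotProduct_eq_zero_of_mulVec_eq_smul_s12 (hA : A.IsSymm) (hu : A *ᵥ u = μ • u)
    (hv : A *ᵥ v = lam • v) (hne : μ ≠ lam) : u ⬝ᵥ v = 0 := by
  have h : μ * (u ⬝ᵥ v) = lam * (u ⬝ᵥ v) :=
    calc μ * (u ⬝ᵥ v) = (A *ᵥ u) ⬝ᵥ v := by rw [hu, smul_dotProduct, smul_eq_mul]
      _ = u ⬝ᵥ (A *ᵥ v) := by rw [dotProduct_mulVec, ← mulVec_transpose, hA.eq]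
      _ = lam * (u ⬝ᵥ v) := by rw [hv, dotProduct_smul, smul_eq_mul]
  exact (mul_eq_mul_right_iff.1 h).resolve_left hne

theorem sub_smul_vecMulVec_mulVec (A : Matrix ι ι K) (α : K) (u v : ι → K) :
    (A - α • vecMulVec u u) *ᵥ v = A *ᵥ v - (α * (u ⬝ᵥ v)) • u := by
  rw [sub_mulVec, smul_mulVec, vecMulVec_mulVec, op_smul_eq_smul, smul_smul]

theorem sub_smul_vecMulVec_mulVec_self (hAu : A *ᵥ u = 0) (hu : u ⬝ᵥ u = 1) :
    (A - α • vecMulVec u u) *ᵥ u = -α • u := by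
  rw [sub_smul_vecMulVec_mulVec, hAu, hu, mul_one, zero_sub, neg_smul]

theorem IsSymm.sub_smul_vecMulVec_mulVec_eq_smul_iff (hA : A.IsSymm) (hAu : A *ᵥ u = 0)
    (hu : u ⬝ᵥ u = 1) (hlam : lam ≠ -α) :
    (A - α • vecMulVec u u) *ᵥ v = lam • v ↔ A *ᵥ v = lam • v ∧ u ⬝ᵥ v = 0 := by
  constructor
  · intro hv
    have huv : u ⬝ᵥ v = 0 := (hA.sub_smul_vecMulVec_self α u).dotProduct_eq_zero_of_mulVec_eq_smul_s12
      (sub_smul_vecMulVec_mulVec_self hAu hu) hv hlam.symm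
    rw [sub_smul_vecMulVec_mulVec, huv, mul_zero, zero_smul, sub_zero] at hv
    exact ⟨hv, huv⟩
  · rintro ⟨hv, huv⟩
    rw [sub_smul_vecMulVec_mulVec, huv, mul_zero, zero_smul, sub_zero, hv]

end RankOnePerturbation

variable {ι : Type*} [Fintype ι]

theorem sum_sum_mul_sub_mul_sq {R : Type*} [CommRing R] (s v : ι → R) :
    ∑ i, ∑ j, (s j * v i - s i * v j) ^ 2 = 2 * ((s ⬝ᵥ s) * (v ⬝ᵥ v) - (s ⬝ᵥ v) ^ 2) := by
  calc ∑ i, ∑ j, (s j * v i - s i * v j) ^ 2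
      = ∑ i, ∑ j, (v i * v i * (s j * s j) + s i * s i * (v j * v j)
          - 2 * (s i * v i) * (s j * v j)) :=
        sum_congr rfl fun i _ => sum_congr rfl fun j _ => by ring
    _ = 2 * ((s ⬝ᵥ s) * (v ⬝ᵥ v) - (s ⬝ᵥ v) ^ 2) := by
        simp only [dotProduct, sum_add_distrib, sum_sub_distrib, ← mul_sum, ← sum_mul]
        ring

theorem sum_sum_mul_comm_of_isSymm {R : Type*} [CommSemiring R] {C : Matrix ι ι R} (hC : C.IsSymm)
    (f : ι → ι → R) :
    ∑ i, ∑ j, C i j * f i j = ∑ i, ∑ j, C i j * f j i := by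
  rw [sum_comm]
  simp only [hC.apply]

section MaxwellStefan

variable [DecidableEq ι]

/-- The diagonal of `C` cancels, so only the off-diagonal entries `C i j = 1 / Đ i j` matter. -/
def maxwellStefan (s : ι → ℝ) (C : Matrix ι ι ℝ) : Matrix ι ι ℝ :=
  diagonal s * C * diagonal s - diagonal (C *ᵥ (s * s))

variable {s v : ι → ℝ} {C : Matrix ι ι ℝ} {α δ lam : ℝ}

theorem maxwellStefan_apply (i j : ι) :
    maxwellStefan s C i j = s i * s j * C i j - if i = j then (C *ᵥ (s * s)) i else 0 := by
  simp only [maxwellStefan, sub_apply, mul_diagonal, diagonal_mul, diagonal_apply, sub_left_inj]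
  ring

theorem maxwellStefan_apply_of_ne {i j : ι} (h : i ≠ j) :
    maxwellStefan s C i j = s i * s j * C i j := by
  rw [maxwellStefan_apply, if_neg h, sub_zero]

theorem maxwellStefan_sub_smul_vecMulVec_apply_pos (hs : ∀ i, 0 < s i)
    (hCα : ∀ i j, i ≠ j → α < C i j) {i j : ι} (h : i ≠ j) :
    0 < (maxwellStefan s C - α • vecMulVec s s) i j := by
  have hentry : (maxwellStefan s C - α • vecMulVec s s) i j = s i * s j * (C i j - α) := by
    rw [sub_apply, maxwellStefan_apply_of_ne h, smul_apply, vecMulVec_apply, smul_eq_mul]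
    ring
  rw [hentry]
  exact mul_pos (mul_pos (hs i) (hs j)) (sub_pos.2 (hCα i j h))

theorem maxwellStefan_apply_self (i : ι) :
    maxwellStefan s C i i = -∑ k ∈ univ.erase i, C i k * (s k * s k) := by
  rw [maxwellStefan_apply, if_pos rfl, mulVec, dotProduct, ← add_sum_erase _ _ (mem_univ i)]
  simp only [Pi.mul_apply]
  ring

theorem maxwellStefan_mulVec_apply (v : ι → ℝ) (i : ι) :
    (maxwellStefan s C *ᵥ v) i = ∑ j, C i j * (s i * s j * v j - s j * s j * v i) := by
  simp only [mulVec, dotProduct, maxwellStefan_apply, sub_mul, sum_sub_distrib, ite_mul, zero_mul,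
    sum_ite_eq, mem_univ, if_true, Pi.mul_apply, mul_sub, sum_mul]
  congr 1 <;> refine sum_congr rfl fun j _ => by ring

theorem maxwellStefan_mulVec_self : maxwellStefan s C *ᵥ s = 0 := by
  ext i
  rw [maxwellStefan_mulVec_apply]
  exact sum_eq_zero fun j _ => by ring

theorem isSymm_maxwellStefan (hC : C.IsSymm) : (maxwellStefan s C).IsSymm :=
  IsSymm.ext fun i j => by
    by_cases h : i = j
    · rw [h]
    · rw [maxwellStefan_apply, maxwellStefan_apply, if_neg h, if_neg (Ne.symm h), hC.apply]
      ring

theorem dotProduct_maxwellStefan_mulVec (hC : C.IsSymm) (v : ι → ℝ) :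
    v ⬝ᵥ (maxwellStefan s C *ᵥ v) = -(1 / 2) * ∑ i, ∑ j, C i j * (s j * v i - s i * v j) ^ 2 := by
  let f : ι → ι → ℝ := fun i j => s i * s j * v i * v j - s j ^ 2 * v i ^ 2
  have hf : v ⬝ᵥ (maxwellStefan s C *ᵥ v) = ∑ i, ∑ j, C i j * f i j := by
    simp only [dotProduct, maxwellStefan_mulVec_apply, mul_sum]
    exact sum_congr rfl fun i _ => sum_congr rfl fun j _ => by ring
  have hsq : ∑ i, ∑ j, C i j * (s j * v i - s i * v j) ^ 2 =
      -(∑ i, ∑ j, C i j * f i j + ∑ i, ∑ j, C i j * f j i) := by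
    simp only [← sum_add_distrib, ← sum_neg_distrib]
    exact sum_congr rfl fun i _ => sum_congr rfl fun j _ => by ring
  rw [hf, hsq, ← sum_sum_mul_comm_of_isSymm hC f]
  ring

theorem dotProduct_maxwellStefan_mulVec_le (hC : C.IsSymm) (hδ : ∀ i j, i ≠ j → δ ≤ C i j)
    (hsv : s ⬝ᵥ v = 0) : v ⬝ᵥ (maxwellStefan s C *ᵥ v) ≤ -δ * ((s ⬝ᵥ s) * (v ⬝ᵥ v)) := by
  have hlow : δ * ∑ i, ∑ j, (s j * v i - s i * v j) ^ 2 ≤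
      ∑ i, ∑ j, C i j * (s j * v i - s i * v j) ^ 2 := by
    simp only [mul_sum]
    refine sum_le_sum fun i _ => sum_le_sum fun j _ => ?_
    rcases eq_or_ne i j with rfl | h
    · simp
    · exact mul_le_mul_of_nonneg_right (hδ i j h) (sq_nonneg _)
  rw [sum_sum_mul_sub_mul_sq, hsv] at hlow
  rw [dotProduct_maxwellStefan_mulVec hC]
  linarith

theorem le_neg_of_maxwellStefan_mulVec_eq_smul (hC : C.IsSymm)
    (hδ : ∀ i j, i ≠ j → δ ≤ C i j) (hs : s ⬝ᵥ s = 1) (hv : v ≠ 0) (hsv : s ⬝ᵥ v = 0)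
    (heig : maxwellStefan s C *ᵥ v = lam • v) : lam ≤ -δ := by
  have hvv : 0 < v ⬝ᵥ v :=
    (sum_nonneg fun i _ => mul_self_nonneg (v i)).lt_of_ne
      (Ne.symm (dotProduct_self_eq_zero.not.2 hv))
  have h := dotProduct_maxwellStefan_mulVec_le hC hδ hsv
  rw [heig, dotProduct_smul, smul_eq_mul, hs, one_mul] at h
  exact le_of_mul_le_mul_right h hvv

theorem setOf_eigenvalue_maxwellStefan_ne_zero_eq (hC : C.IsSymm)
    (hδ : ∀ i j, i ≠ j → δ ≤ C i j) (hs : s ⬝ᵥ s = 1) (hα0 : 0 ≤ α) (hαδ : α < δ) :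
    {lam : ℝ | lam ≠ 0 ∧ ∃ v : ι → ℝ, v ≠ 0 ∧ maxwellStefan s C *ᵥ v = lam • v} =
      {lam : ℝ | ∃ v : ι → ℝ, v ≠ 0 ∧ (maxwellStefan s C - α • vecMulVec s s) *ᵥ v = lam • v}
        \ {-α} := by
  have hA := isSymm_maxwellStefan (s := s) hC
  ext lam
  simp only [Set.mem_ofPred_eq, Set.mem_sdiff, Set.mem_singleton_iff]
  constructor
  · rintro ⟨hlam, v, hv, hAv⟩
    have hsv : s ⬝ᵥ v = 0 := hA.dotProduct_eq_zero_of_mulVec_eq_smul_s12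
      (by rw [zero_smul]; exact maxwellStefan_mulVec_self) hAv (Ne.symm hlam)
    have hgap := le_neg_of_maxwellStefan_mulVec_eq_smul hC hδ hs hv hsv hAv
    have hne : lam ≠ -α := by linarith
    exact ⟨⟨v, hv, (hA.sub_smul_vecMulVec_mulVec_eq_smul_iff maxwellStefan_mulVec_self hs
      hne).2 ⟨hAv, hsv⟩⟩, hne⟩
  · rintro ⟨⟨v, hv, hBv⟩, hne⟩
    obtain ⟨hAv, hsv⟩ :=
      (hA.sub_smul_vecMulVec_mulVec_eq_smul_iff maxwellStefan_mulVec_self hs hne).1 hBv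
    have hgap := le_neg_of_maxwellStefan_mulVec_eq_smul hC hδ hs hv hsv hAv
    exact ⟨by linarith, v, hv, hAv⟩

end MaxwellStefan

end Matrix

theorem MS_rank_one_perturbation_general
    (n : ℕ)
    (D : Fin n → Fin n → ℝ)
    (hDsymm : ∀ i j, D i j = D j i)
    (x : Fin n → ℝ) (hx : ∀ i, 0 < x i) (hxsum : ∑ i, x i = 1)
    (δ : ℝ) (hδ : IsLeast {r : ℝ | ∃ i j : Fin n, i ≠ j ∧ r = 1 / D i j} δ)
    (AS : Matrix (Fin n) (Fin n) ℝ)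
    (hAS : ∀ i j, AS i j =
      if i = j then -(∑ k ∈ Finset.univ.erase i, x k / D i k)
      else Real.sqrt (x i * x j) / D i j)
    (α : ℝ) (hα0 : 0 ≤ α) (hαδ : α < δ)
    (ASα : Matrix (Fin n) (Fin n) ℝ)
    (hASα : ASα = AS - α • Matrix.vecMulVec (fun i => Real.sqrt (x i))
        (fun i => Real.sqrt (x i))) :
    (∀ i j, i ≠ j → 0 ≤ ASα i j)
    ∧ (∀ I : Set (Fin n), I.Nonempty → Iᶜ.Nonempty →
        ∃ i ∈ I, ∃ j ∈ Iᶜ, ASα i j ≠ 0)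
    ∧ (∀ i, 0 < Real.sqrt (x i))
    ∧ ASα.mulVec (fun i => Real.sqrt (x i)) = (-α) • (fun i => Real.sqrt (x i))
    ∧ {lam : ℝ | lam ≠ 0 ∧ ∃ v : Fin n → ℝ, v ≠ 0 ∧ AS.mulVec v = lam • v}
      = {lam : ℝ | ∃ v : Fin n → ℝ, v ≠ 0 ∧ ASα.mulVec v = lam • v} \ {-α} := by
  set s : Fin n → ℝ := fun i => Real.sqrt (x i)
  set C : Matrix (Fin n) (Fin n) ℝ := of fun i j => 1 / D i j
  have hs : ∀ i, 0 < s i := fun i => Real.sqrt_pos.2 (hx i)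
  have hss : ∀ i, s i * s i = x i := fun i => Real.mul_self_sqrt (hx i).le
  have hs1 : s ⬝ᵥ s = 1 := by simpa only [dotProduct, hss] using hxsum
  have hC : C.IsSymm := IsSymm.ext fun i j => by simp [C, hDsymm]
  have hCδ : ∀ i j, i ≠ j → δ ≤ C i j := fun i j h => hδ.2 ⟨i, j, h, rfl⟩
  have hAS_eq : AS = maxwellStefan s C := by
    ext i j
    rcases eq_or_ne i j with rfl | h
    · simp [hAS, maxwellStefan_apply_self, C, hss, div_eq_inv_mul]
    · rw [hAS, if_neg h, maxwellStefan_apply_of_ne h, Real.sqrt_mul (hx i).le]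
      simp [C, s, div_eq_mul_inv]
  subst hAS_eq hASα
  have hoff : ∀ i j, i ≠ j → 0 < (maxwellStefan s C - α • vecMulVec s s) i j :=
    fun i j => maxwellStefan_sub_smul_vecMulVec_apply_pos hs fun i j h => hαδ.trans_le (hCδ i j h)
  exact ⟨fun i j h => (hoff i j h).le, fun I ⟨i, hi⟩ ⟨j, hj⟩ =>
    ⟨i, hi, j, hj, (hoff i j (ne_of_mem_of_not_mem hi hj)).ne'⟩, hs,
    sub_smul_vecMulVec_mulVec_self maxwellStefan_mulVec_self hs1,
    setOf_eigenvalue_maxwellStefan_ne_zero_eq hC hCδ hs1 hα0 hαδ⟩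

theorem MS_rank_one_perturbation
    (n : ℕ) (hn : 2 ≤ n)
    (D : Fin n → Fin n → ℝ)
    (hDpos : ∀ i j, i ≠ j → 0 < D i j)
    (hDsymm : ∀ i j, D i j = D j i)
    (x : Fin n → ℝ) (hx : ∀ i, 0 < x i) (hxsum : ∑ i, x i = 1)
    (δ : ℝ) (hδ : IsLeast {r : ℝ | ∃ i j : Fin n, i ≠ j ∧ r = 1 / D i j} δ)
    (AS : Matrix (Fin n) (Fin n) ℝ)
    (hAS : ∀ i j, AS i j =
      if i = j then -(∑ k ∈ Finset.univ.erase i, x k / D i k)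
      else Real.sqrt (x i * x j) / D i j)
    (α : ℝ) (hα0 : 0 ≤ α) (hαδ : α < δ)
    (ASα : Matrix (Fin n) (Fin n) ℝ)
    (hASα : ASα = AS - α • Matrix.vecMulVec (fun i => Real.sqrt (x i))
        (fun i => Real.sqrt (x i))) :
    (∀ i j, i ≠ j → 0 ≤ ASα i j)
    ∧ (∀ I : Set (Fin n), I.Nonempty → Iᶜ.Nonempty →
        ∃ i ∈ I, ∃ j ∈ Iᶜ, ASα i j ≠ 0)
    ∧ (∀ i, 0 < Real.sqrt (x i))
    ∧ ASα.mulVec (fun i => Real.sqrt (x i)) = (-α) • (fun i => Real.sqrt (x i))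
    ∧ {lam : ℝ | lam ≠ 0 ∧ ∃ v : Fin n → ℝ, v ≠ 0 ∧ AS.mulVec v = lam • v}
      = {lam : ℝ | ∃ v : Fin n → ℝ, v ≠ 0 ∧ ASα.mulVec v = lam • v} \ {-α} :=
  MS_rank_one_perturbation_general n D hDsymm x hx hxsum δ hδ AS hAS α hα0 hαδ ASα hASα
end

section
/- Let A be a real n×n quasi-positive irreducible matrix. Then the spectral bound s(A) = max{Re λ : λ ∈ σ(A)} is a simple eigenvalue of A possessing a strictly positive eigenvector, and Re λ < s(A) for every other eigenvalue λ of A. -/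
/-!
Adding `c • 1` for large `c` makes `A` entrywise nonnegative with positive diagonal, and every
claim moves along with the shift. For such a `B`, irreducibility makes some power `B ^ k`
entrywise positive. The Collatz–Wielandt set `{s | s • y ≤ B *ᵥ y for some y > 0}` has a greatest
element `t` by compactness of its normalised version. A maximising `y` is an eigenvector, since
otherwise applying `B ^ k` would produce a strictly larger admissible `s`, and irreducibility
makes it strictly positive. Taking entrywise moduli of a complex eigenvector shows `‖μ‖ ≤ t` for
every eigenvalue `μ`, so `Re μ < t` unless `μ = t`. Subtracting from another eigenvector the
largest multiple of the Perron vector lying below it shows that the eigenspace is a line, and the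
positive Perron vector of `Bᵀ`, which is not orthogonal to it, excludes Jordan chains.
-/

open Matrix Polynomial Filter Topology

variable {ι : Type*}

/-- Unlike `Matrix.IsIrreducible`, this imposes no sign condition on the entries. -/
def PartitionIrreducible {R : Type*} [Zero R] (A : Matrix ι ι R) : Prop :=
  ∀ I : Set ι, I.Nonempty → Iᶜ.Nonempty → ∃ i ∈ I, ∃ j ∈ Iᶜ, A i j ≠ 0

namespace PartitionIrreducible

variable {R : Type*}

theorem transpose [Zero R] {A : Matrix ι ι R} (hA : PartitionIrreducible A) :
    PartitionIrreducible Aᵀ := by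
  intro I hI hIc
  obtain ⟨i, hi, j, hj, hij⟩ := hA Iᶜ hIc (by rwa [compl_compl])
  exact ⟨j, by simpa using hj, i, hi, hij⟩

theorem add_smul_one [Semiring R] [DecidableEq ι] {A : Matrix ι ι R}
    (hA : PartitionIrreducible A) (c : R) : PartitionIrreducible (A + c • 1) := by
  intro I hI hIc
  obtain ⟨i, hi, j, hj, hij⟩ := hA I hI hIc
  have hne : i ≠ j := by rintro rfl; exact hj hi
  exact ⟨i, hi, j, hj, by simpa [one_apply_ne hne] using hij⟩

end PartitionIrreducible

section Powers

variable [Fintype ι] [DecidableEq ι] {R : Type*} [Semiring R] [PartialOrder R]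
  [IsStrictOrderedRing R] {B : Matrix ι ι R}

theorem pow_succ_apply_pos (hB : ∀ i j, 0 ≤ B i j) {k : ℕ} {i l j : ι}
    (hil : 0 < (B ^ k) i l) (hlj : 0 < B l j) : 0 < (B ^ (k + 1)) i j := by
  rw [pow_succ, mul_apply]
  exact Finset.sum_pos' (fun m _ => mul_nonneg (pow_apply_nonneg hB k i m) (hB m j))
    ⟨l, Finset.mem_univ l, mul_pos hil hlj⟩

theorem PartitionIrreducible.exists_pow_apply_pos (hB : ∀ i j, 0 ≤ B i j)
    (hirr : PartitionIrreducible B) (i j : ι) : ∃ k, 0 < (B ^ k) i j := by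
  by_contra! hj
  obtain ⟨l, ⟨k, hk⟩, m, hm, hlm⟩ := hirr {l | ∃ k, 0 < (B ^ k) i l} ⟨i, 0, by simp⟩
    ⟨j, fun ⟨k, hk⟩ => hj k hk⟩
  exact hm ⟨k + 1, pow_succ_apply_pos hB hk ((hB l m).lt_of_ne' hlm)⟩

theorem pow_apply_pos_of_le (hB : ∀ i j, 0 ≤ B i j) (hdiag : ∀ i, 0 < B i i) {k m : ℕ}
    (hkm : k ≤ m) {i j : ι} (h : 0 < (B ^ k) i j) : 0 < (B ^ m) i j := by
  induction m, hkm using Nat.le_induction with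
  | base => exact h
  | succ m _ ih => exact pow_succ_apply_pos hB ih (hdiag j)

theorem PartitionIrreducible.exists_pow_pos (hB : ∀ i j, 0 ≤ B i j) (hdiag : ∀ i, 0 < B i i)
    (hirr : PartitionIrreducible B) : ∃ k, ∀ i j, 0 < (B ^ k) i j := by
  choose k hk using hirr.exists_pow_apply_pos hB
  refine ⟨Finset.univ.sup fun p : ι × ι => k p.1 p.2,
    fun i j => pow_apply_pos_of_le hB hdiag ?_ (hk i j)⟩
  exact Finset.le_sup (f := fun p : ι × ι => k p.1 p.2) (Finset.mem_univ (i, j))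

end Powers

section Vectors

theorem exists_pos_smul_le [Finite ι] (u : ι → ℝ) {v : ι → ℝ} (hv : ∀ i, 0 < v i) :
    ∃ ε : ℝ, 0 < ε ∧ ε • u ≤ v := by
  have h : ∀ i, ∀ᶠ ε in 𝓝[>] (0 : ℝ), ε * u i < v i := fun i =>
    nhdsWithin_le_nhds <| (continuous_mul_const (u i)).continuousAt.eventually_lt
      continuousAt_const (by simpa using hv i)
  obtain ⟨ε, hεu, hε⟩ := ((eventually_all.2 h).and self_mem_nhdsWithin).exists
  exact ⟨ε, hε, fun i => (hεu i).le⟩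

variable [Fintype ι]

theorem exists_smul_le_and_eq_apply [Nonempty ι] {w : ι → ℝ} (hw : ∀ i, 0 < w i)
    (x : ι → ℝ) : ∃ r : ℝ, r • w ≤ x ∧ ∃ i, r * w i = x i := by
  obtain ⟨i, -, hi⟩ := Finset.univ.exists_min_image (fun i => x i / w i) Finset.univ_nonempty
  refine ⟨x i / w i, fun j => ?_, i, div_mul_cancel₀ _ (hw i).ne'⟩
  simpa [← le_div_iff₀ (hw j)] using hi j (Finset.mem_univ j)

theorem mulVec_pos_of_pos {P : Matrix ι ι ℝ} (hP : ∀ i j, 0 < P i j) {x : ι → ℝ} (hx : 0 < x)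
    (i : ι) : 0 < (P *ᵥ x) i := by
  obtain ⟨j, hj⟩ := (Pi.lt_def.1 hx).2
  exact Finset.sum_pos' (fun l _ => mul_nonneg (hP i l).le (hx.le l))
    ⟨j, Finset.mem_univ j, mul_pos (hP i j) hj⟩

theorem apply_le_one_of_sum_eq_one {y : ι → ℝ} (hy : 0 ≤ y) (hy1 : ∑ i, y i = 1) (j : ι) :
    y j ≤ 1 :=
  hy1 ▸ Finset.single_le_sum (fun k _ => hy k) (Finset.mem_univ j)

end Vectors

section CollatzWielandt

variable [Fintype ι] {B : Matrix ι ι ℝ}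

/-- `0 < y` is meant in the pointwise order on `ι → ℝ`: `y` is nonnegative and nonzero. -/
def collatzWielandtSet (B : Matrix ι ι ℝ) : Set ℝ := {s | ∃ y, 0 < y ∧ s • y ≤ B *ᵥ y}

theorem le_sum_sum_of_smul_le_mulVec (hB : ∀ i j, 0 ≤ B i j) {s : ℝ} {y : ι → ℝ}
    (hy : 0 ≤ y) (hy1 : ∑ i, y i = 1) (h : s • y ≤ B *ᵥ y) : s ≤ ∑ i, ∑ j, B i j :=
  calc s = ∑ i, s * y i := by rw [← Finset.mul_sum, hy1, mul_one]
    _ ≤ ∑ i, (B *ᵥ y) i := Finset.sum_le_sum fun i _ => h i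
    _ ≤ ∑ i, ∑ j, B i j := Finset.sum_le_sum fun i _ => Finset.sum_le_sum fun j _ =>
      mul_le_of_le_one_right (hB i j) (apply_le_one_of_sum_eq_one hy hy1 j)

theorem isCompact_setOf_smul_le_mulVec (hB : ∀ i j, 0 ≤ B i j) :
    IsCompact {p : ℝ × (ι → ℝ) | 0 ≤ p.1 ∧ 0 ≤ p.2 ∧ ∑ i, p.2 i = 1 ∧ p.1 • p.2 ≤ B *ᵥ p.2} := by
  refine (isCompact_Icc (a := ((0 : ℝ), (0 : ι → ℝ)))
    (b := (∑ i, ∑ j, B i j, 1))).of_isClosed_subset ?_ fun p ⟨hs, hy, hy1, h⟩ =>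
      ⟨⟨hs, hy⟩, le_sum_sum_of_smul_le_mulVec hB hy hy1 h, apply_le_one_of_sum_eq_one hy hy1⟩
  exact (isClosed_le continuous_const continuous_fst).inter <|
    (isClosed_le continuous_const continuous_snd).inter <|
    (isClosed_eq (by fun_prop) continuous_const).inter <|
    isClosed_le (continuous_fst.smul continuous_snd) (continuous_const.matrix_mulVec continuous_snd)

theorem exists_isGreatest_collatzWielandtSet [Nonempty ι] (hB : ∀ i j, 0 ≤ B i j) :
    ∃ t, IsGreatest (collatzWielandtSet B) t := by
  have huniform : 0 ≤ B *ᵥ fun _ => (Fintype.card ι : ℝ)⁻¹ := fun i =>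
    Finset.sum_nonneg fun j _ => mul_nonneg (hB i j) (by positivity)
  obtain ⟨⟨t, x⟩, ⟨ht, hx, hx1, htx⟩, hmax⟩ := (isCompact_setOf_smul_le_mulVec hB).exists_isMaxOn
    ⟨(0, fun _ => (Fintype.card ι : ℝ)⁻¹), le_rfl, fun _ => by positivity, by simp,
      by simpa using huniform⟩
    continuous_fst.continuousOn
  refine ⟨t, ⟨x, hx.lt_of_ne ?_, htx⟩, fun s ⟨y, hy, hsy⟩ => ?_⟩
  · rintro rfl; simp at hx1
  rcases lt_or_ge s 0 with hs | hs
  · linarith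
  have hσ : 0 < ∑ i, y i := by
    obtain ⟨j, hj⟩ := (Pi.lt_def.1 hy).2
    exact Finset.sum_pos' (fun i _ => hy.le i) ⟨j, Finset.mem_univ j, hj⟩
  refine hmax (show (s, (∑ i, y i)⁻¹ • y) ∈ _ from ⟨hs, ?_, ?_, ?_⟩)
  · exact smul_nonneg (inv_nonneg.2 hσ.le) hy.le
  · simp [← Finset.mul_sum, hσ.ne']
  · rw [mulVec_smul, smul_comm]
    exact smul_le_smul_of_nonneg_left hsy (inv_nonneg.2 hσ.le)

theorem exists_mulVec_eq_smul_of_isGreatest [DecidableEq ι] {k : ℕ}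
    (hk : ∀ i j, 0 < (B ^ k) i j) {t : ℝ} (ht : IsGreatest (collatzWielandtSet B) t) :
    ∃ x, 0 < x ∧ B *ᵥ x = t • x := by
  obtain ⟨⟨x, hx, htx⟩, hmax⟩ := ht
  refine ⟨x, hx, by_contra fun hne => ?_⟩
  set z := B *ᵥ x - t • x
  have hz : 0 < z := (sub_nonneg.2 htx).lt_of_ne (sub_ne_zero.2 hne).symm
  set u := (B ^ k) *ᵥ x
  have hu : ∀ i, 0 < u i := mulVec_pos_of_pos hk hx
  have hBu : B *ᵥ u = t • u + (B ^ k) *ᵥ z := by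
    rw [mulVec_mulVec, ← pow_succ', pow_succ, ← mulVec_mulVec, mulVec_sub, mulVec_smul]
    abel
  obtain ⟨ε, hε, hεu⟩ := exists_pos_smul_le u (mulVec_pos_of_pos hk hz)
  have hu0 : 0 < u := Pi.lt_def.2 ⟨fun i => (hu i).le, (Pi.lt_def.1 hx).2.imp fun i _ => hu i⟩
  have := hmax ⟨u, hu0, by rw [hBu, add_smul]; exact add_le_add le_rfl hεu⟩
  linarith

theorem norm_le_of_isRoot_charpoly_map [DecidableEq ι] (hB : ∀ i j, 0 ≤ B i j) {t : ℝ}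
    (ht : t ∈ upperBounds (collatzWielandtSet B)) {μ : ℂ}
    (hμ : (B.map Complex.ofReal).charpoly.IsRoot μ) : ‖μ‖ ≤ t := by
  rw [← charpoly_toLin', ← Module.End.hasEigenvalue_iff_isRoot_charpoly] at hμ
  obtain ⟨v, hv⟩ := hμ.exists_hasEigenvector
  have hBv : B.map Complex.ofReal *ᵥ v = μ • v := by rw [← toLin'_apply, hv.apply_eq_smul]
  obtain ⟨j, hj⟩ := Function.ne_iff.1 hv.2
  refine ht ⟨fun i => ‖v i‖, Pi.lt_def.2 ⟨fun i => norm_nonneg _, j, norm_pos_iff.2 hj⟩,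
    fun i => ?_⟩
  calc ‖μ‖ * ‖v i‖ = ‖(B.map Complex.ofReal *ᵥ v) i‖ := by rw [hBv]; simp
    _ ≤ ∑ j, ‖(B i j : ℂ) * v j‖ := norm_sum_le _ _
    _ = (B *ᵥ fun j => ‖v j‖) i := by simp [mulVec, dotProduct, abs_of_nonneg (hB _ _)]

end CollatzWielandt

section PerronVector

variable [Fintype ι] {B : Matrix ι ι ℝ}

theorem PartitionIrreducible.pos_of_mulVec_eq_smul (hB : ∀ i j, 0 ≤ B i j)
    (hirr : PartitionIrreducible B) {t : ℝ} {z : ι → ℝ} (hz : 0 < z) (hBz : B *ᵥ z = t • z)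
    (i : ι) : 0 < z i := by
  by_contra! hzi
  obtain ⟨l, hl, j, hj, hlj⟩ := hirr {l | z l = 0} ⟨i, le_antisymm hzi (hz.le i)⟩
    (let ⟨j, hj⟩ := (Pi.lt_def.1 hz).2; ⟨j, hj.ne'⟩)
  have hpos : 0 < (B *ᵥ z) l :=
    Finset.sum_pos' (fun m _ => mul_nonneg (hB l m) (hz.le m))
      ⟨j, Finset.mem_univ j, mul_pos ((hB l j).lt_of_ne' hlj) ((hz.le j).lt_of_ne' hj)⟩
  simp [hBz, show z l = 0 from hl] at hpos

theorem PartitionIrreducible.exists_eq_smul_of_mulVec_eq_smul [Nonempty ι]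
    (hB : ∀ i j, 0 ≤ B i j) (hirr : PartitionIrreducible B) {t : ℝ} {w x : ι → ℝ}
    (hw : ∀ i, 0 < w i) (hBw : B *ᵥ w = t • w) (hBx : B *ᵥ x = t • x) :
    ∃ r : ℝ, r • w = x := by
  obtain ⟨r, hrx, i, hri⟩ := exists_smul_le_and_eq_apply hw x
  refine ⟨r, by_contra fun hne => ?_⟩
  have hz : 0 < x - r • w := (sub_nonneg.2 hrx).lt_of_ne (sub_ne_zero.2 (Ne.symm hne)).symm
  have := hirr.pos_of_mulVec_eq_smul hB hz
    (by rw [mulVec_sub, mulVec_smul, hBx, hBw, smul_comm, smul_sub]) i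
  simp [← hri] at this

theorem PartitionIrreducible.exists_perronVector [Nonempty ι] [DecidableEq ι]
    (hB : ∀ i j, 0 ≤ B i j) (hdiag : ∀ i, 0 < B i i) (hirr : PartitionIrreducible B) :
    ∃ t w, (∀ i, 0 < w i) ∧ B *ᵥ w = t • w ∧ t ∈ upperBounds (collatzWielandtSet B) := by
  obtain ⟨t, ht⟩ := exists_isGreatest_collatzWielandtSet hB
  obtain ⟨k, hk⟩ := hirr.exists_pow_pos hB hdiag
  obtain ⟨w, hw, hBw⟩ := exists_mulVec_eq_smul_of_isGreatest hk ht
  exact ⟨t, w, hirr.pos_of_mulVec_eq_smul hB hw hBw, hBw, ht.2⟩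

end PerronVector

theorem Complex.re_lt_of_norm_le_of_ne {z : ℂ} {r : ℝ} (hz : ‖z‖ ≤ r) (hne : z ≠ r) :
    z.re < r := by
  refine (z.re_le_norm.trans hz).lt_of_ne fun hre => hne ?_
  obtain ⟨-, him⟩ :=
    Complex.nonneg_iff.1 (Complex.re_eq_norm.1 (le_antisymm z.re_le_norm (hre ▸ hz)))
  exact Complex.ext (by simpa using hre) (by simp [← him])

theorem Module.End.rootMultiplicity_charpoly_eq_one {K V : Type*} [Field K] [AddCommGroup V]
    [Module K V] [FiniteDimensional K V] {f : Module.End K V} {μ : K} {w : V} (hw : w ≠ 0)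
    (heig : f.eigenspace μ = K ∙ w) (φ : V →ₗ[K] K) (hφ : ∀ v, φ (f v) = μ * φ v)
    (hφw : φ w ≠ 0) : f.charpoly.rootMultiplicity μ = 1 := by
  suffices f.maxGenEigenspace μ = K ∙ w by
    rw [← LinearMap.finrank_maxGenEigenspace_eq, this, finrank_span_singleton hw]
  refine le_antisymm (fun x hx => ?_) (heig ▸ eigenspace_le_maxGenEigenspace)
  obtain ⟨k, hk⟩ := (mem_maxGenEigenspace _ _ _).1 hx
  clear hx
  induction k generalizing x with
  | zero => simp_all
  | succ k ih =>
    rw [pow_succ, mul_apply] at hk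
    obtain ⟨r, hr⟩ := Submodule.mem_span_singleton.1 (ih _ hk)
    have hr0 : r = 0 := by
      have := congrArg φ hr
      simp only [map_smul, LinearMap.sub_apply, map_sub, LinearMap.smul_apply, one_apply, hφ,
        smul_eq_mul, sub_self] at this
      exact (mul_eq_zero.1 this).resolve_right hφw
    rw [← heig, mem_eigenspace_iff, ← sub_eq_zero]
    simpa [hr0] using hr.symm

section PerronRoot

variable [Fintype ι] [DecidableEq ι]

theorem Matrix.charpoly_add_smul_one {R : Type*} [CommRing R] (A : Matrix ι ι R) (c : R) :
    (A + c • 1).charpoly = A.charpoly.comp (X - C c) := by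
  simpa [sub_eq_add_neg, smul_one_eq_diagonal] using charpoly_sub_scalar A (-c)

def IsPerronRoot (A : Matrix ι ι ℝ) (s : ℝ) : Prop :=
  A.charpoly.IsRoot s ∧ A.charpoly.rootMultiplicity s = 1 ∧
    (∃ w : ι → ℝ, (∀ i, 0 < w i) ∧ A *ᵥ w = s • w) ∧
    ∀ lam : ℂ, (A.map Complex.ofReal).charpoly.IsRoot lam → lam ≠ s → lam.re < s

theorem IsPerronRoot.of_add_smul_one {A : Matrix ι ι ℝ} {s c : ℝ}
    (h : IsPerronRoot (A + c • 1) (s + c)) : IsPerronRoot A s := by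
  obtain ⟨hroot, hmult, ⟨w, hw, hAw⟩, hre⟩ := h
  have hmap : (A + c • 1).map Complex.ofReal = A.map Complex.ofReal + (c : ℂ) • 1 := by
    ext i j
    rcases eq_or_ne i j with rfl | hij <;> simp [one_apply_ne, *]
  rw [charpoly_add_smul_one] at hroot hmult
  refine ⟨by simpa using hroot, ?_, ⟨w, hw, ?_⟩, fun lam hlam hne => ?_⟩
  · have := rootMultiplicity_comp_C_mul_X_add_C A.charpoly 1 (-c) (s + c) isUnit_one
    rwa [C_1, one_mul, C_neg, ← sub_eq_add_neg, one_mul, add_neg_cancel_right, hmult,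
      eq_comm] at this
  · rw [add_mulVec, smul_mulVec, one_mulVec, add_smul] at hAw
    exact add_right_cancel hAw
  · have := hre (lam + c) (by rw [hmap, charpoly_add_smul_one]; simpa using hlam)
      (by contrapose! hne; push_cast at hne; linear_combination hne)
    simpa using this

theorem PartitionIrreducible.exists_isPerronRoot [Nonempty ι] {B : Matrix ι ι ℝ}
    (hB : ∀ i j, 0 ≤ B i j) (hdiag : ∀ i, 0 < B i i) (hirr : PartitionIrreducible B) :
    ∃ t, IsPerronRoot B t := by
  obtain ⟨t, w, hw, hBw, ht⟩ := hirr.exists_perronVector hB hdiag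
  obtain ⟨t', y, hy, hBy, -⟩ :=
    hirr.transpose.exists_perronVector (B := Bᵀ) (fun i j => hB j i) hdiag
  rw [mulVec_transpose] at hBy
  have hyw : y ⬝ᵥ w ≠ 0 :=
    (Finset.sum_pos (fun i _ => mul_pos (hy i) (hw i)) Finset.univ_nonempty).ne'
  have htt' : t' = t := by
    have := dotProduct_mulVec y B w
    rw [hBw, hBy, dotProduct_smul, smul_dotProduct, smul_eq_mul, smul_eq_mul] at this
    exact (mul_right_cancel₀ hyw this).symm
  have hw0 : w ≠ 0 := fun h => (hw (Classical.arbitrary ι)).ne' (congrFun h _)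
  have heig : Module.End.eigenspace (toLin' B) t = ℝ ∙ w := by
    ext x
    rw [Module.End.mem_eigenspace_iff, toLin'_apply, Submodule.mem_span_singleton]
    exact ⟨hirr.exists_eq_smul_of_mulVec_eq_smul hB hw hBw, by
      rintro ⟨r, rfl⟩; rw [mulVec_smul, hBw, smul_comm]⟩
  refine ⟨t, ?_, ?_, ⟨w, hw, hBw⟩, fun μ hμ hne =>
    Complex.re_lt_of_norm_le_of_ne (norm_le_of_isRoot_charpoly_map hB ht hμ) hne⟩
  · rw [← charpoly_toLin', ← Module.End.hasEigenvalue_iff_isRoot_charpoly]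
    exact Module.End.hasEigenvalue_of_hasEigenvector
      (Module.End.hasEigenvector_iff.2 ⟨heig ▸ Submodule.mem_span_singleton_self w, hw0⟩)
  · rw [← charpoly_toLin']
    exact Module.End.rootMultiplicity_charpoly_eq_one hw0 heig (dotProductEquiv ℝ ι y)
      (fun v => by simp [dotProduct_mulVec, hBy, htt']) hyw

end PerronRoot

/-- Perron-Frobenius theorem for quasi-positive irreducible matrices. -/
theorem perron_frobenius_quasipositive
    (n : ℕ) (hn : 1 ≤ n)
    (A : Matrix (Fin n) (Fin n) ℝ)
    (hquasi : ∀ i j, i ≠ j → 0 ≤ A i j)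
    (hirr : ∀ I : Set (Fin n), I.Nonempty → Iᶜ.Nonempty →
      ∃ i ∈ I, ∃ j ∈ Iᶜ, A i j ≠ 0) :
    ∃ s : ℝ,
      A.charpoly.IsRoot s
      ∧ A.charpoly.rootMultiplicity s = 1
      ∧ (∃ w : Fin n → ℝ, (∀ i, 0 < w i) ∧ A.mulVec w = s • w)
      ∧ (∀ lam : ℂ, (A.map (Complex.ofReal)).charpoly.IsRoot lam →
          lam ≠ (s : ℂ) → lam.re < s) := by
  have : Nonempty (Fin n) := ⟨⟨0, hn⟩⟩
  obtain ⟨b, hb⟩ := (Set.finite_range fun i => A i i).bddBelow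
  set c := 1 - b
  have hdiag : ∀ i, 0 < (A + c • 1) i i := fun i => by
    have := hb (Set.mem_range_self i)
    simp only [Matrix.add_apply, Matrix.smul_apply, one_apply_eq, smul_eq_mul, mul_one, c]
    linarith
  have hB : ∀ i j, 0 ≤ (A + c • 1) i j := fun i j => by
    rcases eq_or_ne i j with rfl | hij
    · exact (hdiag i).le
    · simpa [one_apply_ne hij] using hquasi i j hij
  obtain ⟨t, ht⟩ :=
    PartitionIrreducible.exists_isPerronRoot hB hdiag (PartitionIrreducible.add_smul_one hirr c)
  exact ⟨t - c, IsPerronRoot.of_add_smul_one (c := c) (by rwa [sub_add_cancel])⟩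
end

section
/- Let A be the Maxwell-Stefan matrix for x ≫ 0 with ∑ x_i = 1, and E = {u ∈ ℝⁿ : ∑ u_i = 0}. Then for every d ∈ E the equation A J = d has a unique solution J ∈ E; moreover, for sufficiently small μ > 0 the matrix A_μ := A − μ (x ⊗ e) is invertible on ℝⁿ and J = A_μ^{−1} d. -/
/-!
Symmetry of `D` makes the column sums of the Maxwell–Stefan matrix `A` vanish, so `A` maps into
`E = {u | ∑ i, u i = 0}`; a maximum principle for `u i / x i` shows that every `u` with `A u = 0`
is a multiple of `x`, hence `ker A ∩ E = 0`. For `μ ≠ 0`, summing `A u = μ (∑ i, u i) x` over the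
coordinates forces `∑ i, u i = 0`, so `A - μ x ⊗ e` is injective, hence invertible. Solving
`(A - x ⊗ e) J = d` for `d ∈ E` and summing once more gives `J ∈ E` and `A J = d`, and on `E` the
perturbation `A - μ x ⊗ e` acts as `A`.
-/

open Finset Matrix

section RankOnePerturbation

variable {ι K : Type*} [Fintype ι] [Field K]

theorem Matrix.sub_smul_vecMulVec_one_mulVec (A : Matrix ι ι K) (x : ι → K) (μ : K)
    (v : ι → K) :
    (A - μ • vecMulVec x (fun _ => 1)) *ᵥ v = A *ᵥ v - (μ * ∑ i, v i) • x := by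
  ext i
  simp only [sub_mulVec, smul_mulVec, vecMulVec_mulVec, Pi.sub_apply, Pi.smul_apply,
    smul_eq_mul, MulOpposite.smul_eq_mul_unop, MulOpposite.unop_op, dotProduct, one_mul]
  ring

variable {A : Matrix ι ι K} {x : ι → K} {μ : K}

theorem Matrix.sum_mulVec_eq_zero_of_one_vecMul_eq_zero (hA : 1 ᵥ* A = 0) (v : ι → K) :
    ∑ i, (A *ᵥ v) i = 0 := by
  rw [← one_dotProduct, dotProduct_mulVec, hA, zero_dotProduct]

theorem Matrix.sum_eq_zero_of_sum_sub_smul_vecMulVec_one_mulVec_eq_zero (hA : 1 ᵥ* A = 0)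
    (hx : ∑ i, x i ≠ 0) (hμ : μ ≠ 0) {v : ι → K}
    (hv : ∑ i, ((A - μ • vecMulVec x (fun _ => 1)) *ᵥ v) i = 0) : ∑ i, v i = 0 := by
  simp only [sub_smul_vecMulVec_one_mulVec, Pi.sub_apply, Pi.smul_apply, smul_eq_mul,
    sum_sub_distrib, sum_mulVec_eq_zero_of_one_vecMul_eq_zero hA, ← mul_sum] at hv
  simpa [hx, hμ] using hv

variable (hA : 1 ᵥ* A = 0) (hker : ∀ u, A *ᵥ u = 0 → ∑ i, u i = 0 → u = 0)
  (hx : ∑ i, x i ≠ 0)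
include hA hker hx

theorem Matrix.eq_zero_of_sub_smul_vecMulVec_one_mulVec_eq_zero (hμ : μ ≠ 0) {u : ι → K}
    (hu : (A - μ • vecMulVec x (fun _ => 1)) *ᵥ u = 0) : u = 0 := by
  have hsum : ∑ i, u i = 0 :=
    sum_eq_zero_of_sum_sub_smul_vecMulVec_one_mulVec_eq_zero hA hx hμ (by simp [hu])
  rw [sub_smul_vecMulVec_one_mulVec, hsum, mul_zero, zero_smul, sub_zero] at hu
  exact hker u hu hsum

theorem Matrix.isUnit_sub_smul_vecMulVec_one [DecidableEq ι] (hμ : μ ≠ 0) :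
    IsUnit (A - μ • vecMulVec x (fun _ => 1)) :=
  mulVec_injective_iff_isUnit.mp fun u v huv => sub_eq_zero.mp <|
    eq_zero_of_sub_smul_vecMulVec_one_mulVec_eq_zero hA hker hx hμ <| by
      rw [mulVec_sub, huv, sub_self]

theorem Matrix.existsUnique_sum_eq_zero_mulVec_eq {d : ι → K} (hd : ∑ i, d i = 0) :
    ∃! J : ι → K, ∑ i, J i = 0 ∧ A *ᵥ J = d := by
  classical
  obtain ⟨J, hJ⟩ := mulVec_surjective_iff_isUnit.mpr
    (isUnit_sub_smul_vecMulVec_one (μ := 1) hA hker hx one_ne_zero) d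
  have hsum : ∑ i, J i = 0 :=
    sum_eq_zero_of_sum_sub_smul_vecMulVec_one_mulVec_eq_zero hA hx one_ne_zero (hJ ▸ hd)
  rw [sub_smul_vecMulVec_one_mulVec, hsum, mul_zero, zero_smul, sub_zero] at hJ
  refine ⟨J, ⟨hsum, hJ⟩, fun J' ⟨hsum', hJ'⟩ => sub_eq_zero.mp <| hker _ ?_ ?_⟩
  · rw [mulVec_sub, hJ, hJ', sub_self]
  · simp [sum_sub_distrib, hsum, hsum']

end RankOnePerturbation

section MaxwellStefan

variable {ι : Type*} [Fintype ι] [DecidableEq ι] {D : ι → ι → ℝ} {x : ι → ℝ}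

noncomputable def maxwellStefanMatrix (D : ι → ι → ℝ) (x : ι → ℝ) : Matrix ι ι ℝ :=
  Matrix.of fun i j => if i = j then -(∑ k ∈ univ.erase i, x k / D i k) else x i / D i j

theorem maxwellStefanMatrix_mulVec_apply (u : ι → ℝ) (i : ι) :
    (maxwellStefanMatrix D x *ᵥ u) i = ∑ j ∈ univ.erase i, (x i * u j - x j * u i) / D i j := by
  rw [mulVec, dotProduct, ← add_sum_erase _ _ (mem_univ i)]
  simp only [maxwellStefanMatrix, of_apply, if_pos, neg_mul, sum_mul, sub_div,
    sum_sub_distrib, neg_add_eq_sub]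
  congr 1
  · refine sum_congr rfl fun j hj => ?_
    rw [if_neg (ne_of_mem_erase hj).symm]
    ring
  · refine sum_congr rfl fun j _ => ?_
    ring

theorem one_vecMul_maxwellStefanMatrix (hD : ∀ i j, D i j = D j i) :
    1 ᵥ* maxwellStefanMatrix D x = 0 := by
  ext j
  simp only [vecMul, dotProduct, Pi.one_apply, one_mul, Pi.zero_apply]
  rw [← add_sum_erase _ _ (mem_univ j)]
  simp only [maxwellStefanMatrix, of_apply, if_pos, neg_add_eq_zero]
  refine sum_congr rfl fun i hi => ?_
  rw [if_neg (ne_of_mem_erase hi), hD]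

theorem exists_eq_smul_of_maxwellStefanMatrix_mulVec_eq_zero (hD : ∀ i j, i ≠ j → 0 < D i j)
    (hx : ∀ i, 0 < x i) {u : ι → ℝ} (hu : maxwellStefanMatrix D x *ᵥ u = 0) :
    ∃ c : ℝ, u = c • x := by
  rcases isEmpty_or_nonempty ι with hι | hι
  · exact ⟨0, Subsingleton.elim _ _⟩
  -- At a maximiser `i₀` of `u i / x i` every term of `(A *ᵥ u) i₀` is `≤ 0`, so all vanish.
  obtain ⟨i₀, -, hmax⟩ := exists_max_image univ (fun i => u i / x i) univ_nonempty
  set c := u i₀ / x i₀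
  have hle : ∀ j, u j ≤ c * x j := fun j => (div_le_iff₀ (hx j)).mp (hmax j (mem_univ j))
  have hui₀ : u i₀ = c * x i₀ := (div_mul_cancel₀ _ (hx i₀).ne').symm
  have hterm : ∀ j, (x i₀ * u j - x j * u i₀) / D i₀ j = x i₀ * (u j - c * x j) / D i₀ j := by
    intro j; rw [hui₀]; ring
  have hnonpos : ∀ j ∈ univ.erase i₀, (x i₀ * u j - x j * u i₀) / D i₀ j ≤ 0 := fun j hj => by
    rw [hterm]
    exact div_nonpos_of_nonpos_of_nonneg
      (mul_nonpos_of_nonneg_of_nonpos (hx i₀).le (sub_nonpos.mpr (hle j)))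
      (hD i₀ j (ne_of_mem_erase hj).symm).le
  have hsum : ∑ j ∈ univ.erase i₀, (x i₀ * u j - x j * u i₀) / D i₀ j = 0 := by
    rw [← maxwellStefanMatrix_mulVec_apply, hu, Pi.zero_apply]
  refine ⟨c, funext fun j => ?_⟩
  rcases eq_or_ne j i₀ with rfl | hj
  · exact hui₀
  have := (sum_eq_zero_iff_of_nonpos hnonpos).mp hsum j (mem_erase.mpr ⟨hj, mem_univ j⟩)
  rw [hterm, div_eq_zero_iff, mul_eq_zero, sub_eq_zero] at this
  rcases this with (h | h) | h
  · exact absurd h (hx i₀).ne'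
  · exact h
  · exact absurd h (hD i₀ j hj.symm).ne'

end MaxwellStefan

theorem MS_inversion_general
    (n : ℕ)
    (D : Fin n → Fin n → ℝ)
    (hDpos : ∀ i j, i ≠ j → 0 < D i j)
    (hDsymm : ∀ i j, D i j = D j i)
    (x : Fin n → ℝ) (hx : ∀ i, 0 < x i) (hxsum : ∑ i, x i = 1)
    (A : Matrix (Fin n) (Fin n) ℝ)
    (hA : ∀ i j, A i j =
      if i = j then -(∑ k ∈ Finset.univ.erase i, x k / D i k) else x i / D i j) :
    (∀ d : Fin n → ℝ, ∑ i, d i = 0 →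
      ∃! J : Fin n → ℝ, (∑ i, J i = 0) ∧ A.mulVec J = d)
    ∧ ∃ μ₀ : ℝ, 0 < μ₀ ∧ ∀ μ : ℝ, 0 < μ → μ < μ₀ →
        IsUnit (A - μ • Matrix.vecMulVec x (fun _ => (1 : ℝ)))
        ∧ ∀ d J : Fin n → ℝ, ∑ i, d i = 0 → ∑ i, J i = 0 → A.mulVec J = d →
            (A - μ • Matrix.vecMulVec x (fun _ => (1 : ℝ))).mulVec J = d := by
  obtain rfl : A = maxwellStefanMatrix D x := Matrix.ext hA
  have hcol := one_vecMul_maxwellStefanMatrix (x := x) hDsymm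
  have hx₁ : ∑ i, x i ≠ 0 := hxsum ▸ one_ne_zero
  have hker : ∀ u, maxwellStefanMatrix D x *ᵥ u = 0 → ∑ i, u i = 0 → u = 0 := by
    intro u hu hsum
    obtain ⟨c, rfl⟩ := exists_eq_smul_of_maxwellStefanMatrix_mulVec_eq_zero hDpos hx hu
    have hc : c = 0 := by simpa [← mul_sum, hxsum] using hsum
    rw [hc, zero_smul]
  refine ⟨fun d hd => existsUnique_sum_eq_zero_mulVec_eq hcol hker hx₁ hd, 1, one_pos,
    fun μ hμ _ => ⟨isUnit_sub_smul_vecMulVec_one hcol hker hx₁ hμ.ne', fun d J _ hJ hAJ => ?_⟩⟩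
  rw [sub_smul_vecMulVec_one_mulVec, hJ, hAJ, mul_zero, zero_smul, sub_zero]

theorem MS_inversion
    (n : ℕ) (hn : 2 ≤ n)
    (D : Fin n → Fin n → ℝ)
    (hDpos : ∀ i j, i ≠ j → 0 < D i j)
    (hDsymm : ∀ i j, D i j = D j i)
    (x : Fin n → ℝ) (hx : ∀ i, 0 < x i) (hxsum : ∑ i, x i = 1)
    (A : Matrix (Fin n) (Fin n) ℝ)
    (hA : ∀ i j, A i j =
      if i = j then -(∑ k ∈ Finset.univ.erase i, x k / D i k) else x i / D i j) :
    (∀ d : Fin n → ℝ, ∑ i, d i = 0 →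
      ∃! J : Fin n → ℝ, (∑ i, J i = 0) ∧ A.mulVec J = d)
    ∧ ∃ μ₀ : ℝ, 0 < μ₀ ∧ ∀ μ : ℝ, 0 < μ → μ < μ₀ →
        IsUnit (A - μ • Matrix.vecMulVec x (fun _ => (1 : ℝ)))
        ∧ ∀ d J : Fin n → ℝ, ∑ i, d i = 0 → ∑ i, J i = 0 → A.mulVec J = d →
            (A - μ • Matrix.vecMulVec x (fun _ => (1 : ℝ))).mulVec J = d :=
  MS_inversion_general n D hDpos hDsymm x hx hxsum A hA
end

section
/- Let A_S be the symmetrized Maxwell-Stefan matrix, X = diag(x), G'' a symmetric positive definite n×n matrix, and D := X^{1/2} (A_{S|Ê})^{−1} X^{1/2} G'' restricted to E = {u : ∑ u_i = 0}, with Ê = {√x}^⊥. Then every eigenvalue λ of D on E with eigenvector v ∈ E, v ≠ 0, satisfies λ > 0 and λ is real. (Proof idea: test the eigenvalue equation with G'' v and use negative definiteness of A_S on Ê and positive definiteness of G''.) -/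
/-!
Write `B = -A_S`, `S = X^{1/2}` and `G = G''`; the eigenvalue problem is `B w = S G v`, `S w = λ v`
with `w ∈ Ê`. Testing the first equation with `w` and using that `S` is Hermitian gives
`w* B w = (S w)* G v = conj λ · v* G v`. Both quadratic forms are positive reals: for a real
symmetric `M` and `z = a + i b` one has `z* M z = a ⬝ M a + b ⬝ M b`, which settles `G`, and
`2 u ⬝ B u = ∑_{i ≠ j} (√x_j u_i - √x_i u_j)² / Đ_ij` vanishes only for `u ∥ √x`, i.e. for `u = 0`
on `Ê`. Hence `conj λ`, and so `λ`, is a positive real number.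
-/

open Matrix Finset
open scoped ComplexOrder

section EigenvaluePositivity

variable {ι 𝕜 : Type*} [Fintype ι] [RCLike 𝕜]

theorem eigenvalue_pos_of_mulVec_eq_mulVec_mulVec {S B G : Matrix ι ι 𝕜} {v w : ι → 𝕜} {lam : 𝕜}
    (hS : S.IsHermitian) (hG : G.PosDef) (hv : v ≠ 0) (hB : 0 < star w ⬝ᵥ B *ᵥ w)
    (hBw : B *ᵥ w = S *ᵥ G *ᵥ v) (hSw : S *ᵥ w = lam • v) : 0 < lam := by
  have hvGv := hG.dotProduct_mulVec_pos hv
  have hwBw : star w ⬝ᵥ B *ᵥ w = star lam * (star v ⬝ᵥ G *ᵥ v) := by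
    rw [hBw, dotProduct_mulVec, ← hS.eq, ← star_mulVec, hSw, star_smul, smul_dotProduct,
      smul_eq_mul]
  have hlam : star lam = (star w ⬝ᵥ B *ᵥ w) * (star v ⬝ᵥ G *ᵥ v)⁻¹ := by
    rw [hwBw, mul_inv_cancel_right₀ hvGv.ne']
  rw [← star_pos_iff, hlam]
  exact mul_pos hB (RCLike.inv_pos_of_pos hvGv)

end EigenvaluePositivity

section RealSymmetricForms

variable {ι : Type*} [Fintype ι]

theorem Matrix.IsSymm.star_dotProduct_map_ofReal_mulVec {M : Matrix ι ι ℝ} (hM : M.IsSymm)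
    (z : ι → ℂ) :
    star z ⬝ᵥ M.map Complex.ofReal *ᵥ z =
      ((Complex.re ∘ z) ⬝ᵥ M *ᵥ (Complex.re ∘ z) + (Complex.im ∘ z) ⬝ᵥ M *ᵥ (Complex.im ∘ z) :
        ℝ) := by
  have hcomm : (Complex.re ∘ z) ⬝ᵥ M *ᵥ (Complex.im ∘ z) =
      (Complex.im ∘ z) ⬝ᵥ M *ᵥ (Complex.re ∘ z) := by
    rw [← dotProduct_transpose_mulVec, hM.eq]
  simp only [dotProduct, mulVec, mul_sum, Function.comp_apply] at hcomm ⊢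
  apply Complex.ext
  · simp only [Complex.re_sum, Complex.mul_re, map_apply, Pi.star_apply, Complex.star_def,
      Complex.conj_re, Complex.conj_im, Complex.ofReal_re, Complex.ofReal_im, Complex.mul_im,
      ← sum_add_distrib]
    exact sum_congr rfl fun i _ => sum_congr rfl fun j _ => by ring
  · rw [← sub_eq_zero] at hcomm
    simp only [← sum_sub_distrib] at hcomm
    simp only [Complex.im_sum, Complex.mul_re, Complex.mul_im, map_apply, Pi.star_apply,
      Complex.star_def, Complex.conj_re, Complex.conj_im, Complex.ofReal_re, Complex.ofReal_im]
    refine (sum_congr rfl fun i _ => sum_congr rfl fun j _ => ?_).trans hcomm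
    ring

theorem Matrix.IsSymm.star_dotProduct_map_ofReal_mulVec_pos {M : Matrix ι ι ℝ} (hM : M.IsSymm)
    {V : Set (ι → ℝ)} (hnonneg : ∀ u, 0 ≤ u ⬝ᵥ M *ᵥ u) (hpos : ∀ u ∈ V, u ≠ 0 → 0 < u ⬝ᵥ M *ᵥ u)
    {z : ι → ℂ} (hre : Complex.re ∘ z ∈ V) (him : Complex.im ∘ z ∈ V) (hz : z ≠ 0) :
    0 < star z ⬝ᵥ M.map Complex.ofReal *ᵥ z := by
  rw [hM.star_dotProduct_map_ofReal_mulVec, Complex.zero_lt_real]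
  by_cases hre0 : Complex.re ∘ z = 0
  · have him0 : Complex.im ∘ z ≠ 0 := fun him0 =>
      hz (funext fun i => Complex.ext (congrFun hre0 i) (congrFun him0 i))
    exact add_pos_of_nonneg_of_pos (hnonneg _) (hpos _ him him0)
  · exact add_pos_of_pos_of_nonneg (hpos _ hre hre0) (hnonneg _)

theorem Matrix.PosDef.map_ofReal {G : Matrix ι ι ℝ} (hG : G.PosDef) :
    (G.map Complex.ofReal).PosDef := by
  have hsymm : G.IsSymm := isHermitian_iff_isSymm.1 hG.isHermitian
  refine .of_dotProduct_mulVec_pos (hG.isHermitian.map _ fun a => by simp) fun z hz =>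
    hsymm.star_dotProduct_map_ofReal_mulVec_pos (V := Set.univ) (fun u => ?_) (fun u _ hu => ?_)
      trivial trivial hz
  · simpa using hG.posSemidef.dotProduct_mulVec_nonneg u
  · simpa using hG.dotProduct_mulVec_pos hu

end RealSymmetricForms

theorem eq_zero_of_proportional_of_dotProduct_eq_zero {ι K : Type*} [Fintype ι] [Field K]
    [LinearOrder K] [IsStrictOrderedRing K] {s u : ι → K} (hs : s ≠ 0)
    (hsu : ∀ i j, s j * u i = s i * u j) (horth : s ⬝ᵥ u = 0) : u = 0 := by
  funext i
  have hui : u i * (s ⬝ᵥ s) = s i * (s ⬝ᵥ u) := by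
    simp only [dotProduct, mul_sum]
    exact sum_congr rfl fun j _ => by linear_combination s j * hsu i j
  rw [horth, mul_zero] at hui
  exact (mul_eq_zero.1 hui).resolve_right (dotProduct_self_eq_zero.not.2 hs)

section MaxwellStefan

variable {ι : Type*} [Fintype ι] [DecidableEq ι]

theorem Finset.sum_sum_erase_swap {M : Type*} [AddCommMonoid M] (f : ι → ι → M) :
    ∑ i, ∑ j ∈ univ.erase i, f i j = ∑ i, ∑ j ∈ univ.erase i, f j i := by
  simp_rw [← filter_ne' univ, sum_filter]
  rw [sum_comm]
  simp_rw [ne_comm]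

noncomputable def maxwellStefanSymm (x : ι → ℝ) (D : ι → ι → ℝ) : Matrix ι ι ℝ :=
  of fun i j => if i = j then -(∑ k ∈ univ.erase i, x k / D i k) else √(x i * x j) / D i j

variable {x : ι → ℝ} {D : ι → ι → ℝ}

theorem maxwellStefanSymm_isSymm (hD : ∀ i j, D i j = D j i) :
    (maxwellStefanSymm x D).IsSymm := by
  refine IsSymm.ext fun i j => ?_
  by_cases hij : i = j
  · rw [hij]
  · simp only [maxwellStefanSymm, of_apply, if_neg hij, if_neg (Ne.symm hij), mul_comm (x i), hD]

theorem neg_maxwellStefanSymm_form (hx : ∀ i, 0 ≤ x i) (u : ι → ℝ) :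
    u ⬝ᵥ -maxwellStefanSymm x D *ᵥ u =
      ∑ i, ∑ j ∈ univ.erase i, (x j * u i ^ 2 - √(x i) * √(x j) * u i * u j) / D i j := by
  simp only [dotProduct, mulVec]
  refine sum_congr rfl fun i _ => ?_
  rw [← add_sum_erase univ _ (mem_univ i)]
  simp only [Matrix.neg_apply, maxwellStefanSymm, of_apply, ↓reduceIte, neg_neg, mul_add, sum_mul,
    mul_sum, ← sum_add_distrib]
  refine sum_congr rfl fun j hj => ?_
  rw [if_neg (ne_of_mem_erase hj).symm, Real.sqrt_mul (hx i)]
  ring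

theorem two_mul_neg_maxwellStefanSymm_form (hx : ∀ i, 0 ≤ x i) (hD : ∀ i j, D i j = D j i)
    (u : ι → ℝ) :
    2 * (u ⬝ᵥ -maxwellStefanSymm x D *ᵥ u) =
      ∑ i, ∑ j ∈ univ.erase i, (√(x j) * u i - √(x i) * u j) ^ 2 / D i j := by
  rw [two_mul, neg_maxwellStefanSymm_form hx]
  nth_rw 2 [sum_sum_erase_swap]
  rw [← sum_add_distrib]
  refine sum_congr rfl fun i _ => ?_
  rw [← sum_add_distrib]
  refine sum_congr rfl fun j _ => ?_
  rw [hD j i, ← add_div]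
  congr 1
  linear_combination -(u i) ^ 2 * Real.sq_sqrt (hx j) - (u j) ^ 2 * Real.sq_sqrt (hx i)

theorem neg_maxwellStefanSymm_form_nonneg (hx : ∀ i, 0 ≤ x i) (hD : ∀ i j, D i j = D j i)
    (hDpos : ∀ i j, i ≠ j → 0 < D i j) (u : ι → ℝ) :
    0 ≤ u ⬝ᵥ -maxwellStefanSymm x D *ᵥ u := by
  have hsum := two_mul_neg_maxwellStefanSymm_form hx hD u
  have : 0 ≤ ∑ i, ∑ j ∈ univ.erase i, (√(x j) * u i - √(x i) * u j) ^ 2 / D i j :=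
    sum_nonneg fun i _ => sum_nonneg fun j hj =>
      div_nonneg (sq_nonneg _) (hDpos i j (ne_of_mem_erase hj).symm).le
  linarith

theorem neg_maxwellStefanSymm_form_pos (hx : ∀ i, 0 < x i) (hD : ∀ i j, D i j = D j i)
    (hDpos : ∀ i j, i ≠ j → 0 < D i j) {u : ι → ℝ} (horth : (fun i => √(x i)) ⬝ᵥ u = 0)
    (hu : u ≠ 0) : 0 < u ⬝ᵥ -maxwellStefanSymm x D *ᵥ u := by
  obtain ⟨i, j, hji, hne⟩ : ∃ i j, j ≠ i ∧ √(x j) * u i ≠ √(x i) * u j := by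
    by_contra! h
    obtain ⟨i, -⟩ := Function.ne_iff.1 hu
    refine hu (eq_zero_of_proportional_of_dotProduct_eq_zero
      (Function.ne_iff.2 ⟨i, (Real.sqrt_pos.2 (hx i)).ne'⟩) (fun i j => ?_) horth)
    rcases eq_or_ne j i with rfl | hji
    · rfl
    · exact h i j hji
  have hsum := two_mul_neg_maxwellStefanSymm_form (fun i => (hx i).le) hD u
  have hterm : ∀ i, ∀ j ∈ univ.erase i, 0 ≤ (√(x j) * u i - √(x i) * u j) ^ 2 / D i j :=
    fun i j hj => div_nonneg (sq_nonneg _) (hDpos i j (ne_of_mem_erase hj).symm).le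
  have : 0 < ∑ i, ∑ j ∈ univ.erase i, (√(x j) * u i - √(x i) * u j) ^ 2 / D i j :=
    sum_pos' (fun i _ => sum_nonneg (hterm i)) ⟨i, mem_univ i, sum_pos' (hterm i)
      ⟨j, mem_erase.2 ⟨hji, mem_univ j⟩,
        div_pos (sq_pos_of_ne_zero (sub_ne_zero.2 hne)) (hDpos i j hji.symm)⟩⟩
  linarith

end MaxwellStefan

theorem MS_diffusion_matrix_positive_real_spectrum_general
    (n : ℕ)
    (D : Fin n → Fin n → ℝ)
    (hDpos : ∀ i j, i ≠ j → 0 < D i j)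
    (hDsymm : ∀ i j, D i j = D j i)
    (x : Fin n → ℝ) (hx : ∀ i, 0 < x i)
    (AS : Matrix (Fin n) (Fin n) ℝ)
    (hAS : ∀ i j, AS i j =
      if i = j then -(∑ k ∈ Finset.univ.erase i, x k / D i k)
      else Real.sqrt (x i * x j) / D i j)
    (X12 : Matrix (Fin n) (Fin n) ℝ)
    (hX12 : X12 = Matrix.diagonal fun i => Real.sqrt (x i))
    (G : Matrix (Fin n) (Fin n) ℝ) (hG : G.PosDef) :
    -- eigenvalue equation for D(u) = X^{1/2} (-A_S|Ê)^{-1} X^{1/2} G'' on E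
    -- (the diffusion matrix of the Maxwell-Stefan system), phrased via:
    -- (-A_S) w = X^{1/2} G'' v with w ∈ Ê and X^{1/2} w = λ v
    ∀ (lam : ℂ) (v w : Fin n → ℂ),
      (∑ i, v i = 0) → v ≠ 0 →
      (∑ i, (Real.sqrt (x i) : ℂ) * w i = 0) →
      ((-AS).map Complex.ofReal).mulVec w
        = (X12.map Complex.ofReal).mulVec ((G.map Complex.ofReal).mulVec v) →
      (X12.map Complex.ofReal).mulVec w = lam • v →
      lam.im = 0 ∧ 0 < lam.re := by
  intro lam v w _ hv hw hBw hSw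
  have hA : AS = maxwellStefanSymm x D := Matrix.ext hAS
  have hS : (X12.map Complex.ofReal).PosDef := by
    rw [hX12, diagonal_map Complex.ofReal_zero, posDef_diagonal_iff]
    exact fun i => Complex.zero_lt_real.2 (Real.sqrt_pos.2 (hx i))
  have hGC := hG.map_ofReal
  have hw0 : w ≠ 0 := by
    rintro rfl
    have hGv : G.map Complex.ofReal *ᵥ v = 0 :=
      mulVec_injective_iff_isUnit.2 hS.isUnit (by rw [← hBw, mulVec_zero, mulVec_zero])
    simpa [hGv] using hGC.dotProduct_mulVec_pos hv
  have hre : (fun i => √(x i)) ⬝ᵥ (Complex.re ∘ w) = 0 := by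
    simpa [dotProduct, Complex.re_sum] using congrArg Complex.re hw
  have him : (fun i => √(x i)) ⬝ᵥ (Complex.im ∘ w) = 0 := by
    simpa [dotProduct, Complex.im_sum] using congrArg Complex.im hw
  have hwBw : 0 < star w ⬝ᵥ (-AS).map Complex.ofReal *ᵥ w := by
    rw [hA]
    exact (maxwellStefanSymm_isSymm hDsymm).neg.star_dotProduct_map_ofReal_mulVec_pos
      (V := {u | (fun i => √(x i)) ⬝ᵥ u = 0})
      (neg_maxwellStefanSymm_form_nonneg (fun i => (hx i).le) hDsymm hDpos)
      (fun _ hu => neg_maxwellStefanSymm_form_pos hx hDsymm hDpos hu) hre him hw0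
  obtain ⟨hpos, him0⟩ := Complex.pos_iff.1
    (eigenvalue_pos_of_mulVec_eq_mulVec_mulVec hS.isHermitian hGC hv hwBw hBw hSw)
  exact ⟨him0.symm, hpos⟩

theorem MS_diffusion_matrix_positive_real_spectrum
    (n : ℕ) (hn : 2 ≤ n)
    (D : Fin n → Fin n → ℝ)
    (hDpos : ∀ i j, i ≠ j → 0 < D i j)
    (hDsymm : ∀ i j, D i j = D j i)
    (x : Fin n → ℝ) (hx : ∀ i, 0 < x i) (hxsum : ∑ i, x i = 1)
    (AS : Matrix (Fin n) (Fin n) ℝ)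
    (hAS : ∀ i j, AS i j =
      if i = j then -(∑ k ∈ Finset.univ.erase i, x k / D i k)
      else Real.sqrt (x i * x j) / D i j)
    (X12 : Matrix (Fin n) (Fin n) ℝ)
    (hX12 : X12 = Matrix.diagonal fun i => Real.sqrt (x i))
    (G : Matrix (Fin n) (Fin n) ℝ) (hG : G.PosDef) :
    -- eigenvalue equation for D(u) = X^{1/2} (-A_S|Ê)^{-1} X^{1/2} G'' on E
    -- (the diffusion matrix of the Maxwell-Stefan system), phrased via:
    -- (-A_S) w = X^{1/2} G'' v with w ∈ Ê and X^{1/2} w = λ v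
    ∀ (lam : ℂ) (v w : Fin n → ℂ),
      (∑ i, v i = 0) → v ≠ 0 →
      (∑ i, (Real.sqrt (x i) : ℂ) * w i = 0) →
      ((-AS).map Complex.ofReal).mulVec w
        = (X12.map Complex.ofReal).mulVec ((G.map Complex.ofReal).mulVec v) →
      (X12.map Complex.ofReal).mulVec w = lam • v →
      lam.im = 0 ∧ 0 < lam.re :=
  MS_diffusion_matrix_positive_real_spectrum_general n D hDpos hDsymm x hx AS hAS X12 hX12 G hG
end

section
/- The Maxwell-Stefan fluxes satisfy the entropy inequality: with J = (1/(RT)) X^{1/2} (A_{S|Ê})^{−1} X^{1/2} g for g ∈ ℝⁿ (representing the gradients ∇μ_i), one has −⟨J, g⟩ ≥ 0, i.e. ⟨(−A_{S|Ê})^{−1} X^{1/2} g, X^{1/2} g⟩ ≥ 0. -/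
/-!
The quadratic form of the symmetrized Maxwell–Stefan matrix is a negative sum of squares,
`2 ⟨w, A_S w⟩ = -∑ᵢ ∑ⱼ (√xⱼ wᵢ - √xᵢ wⱼ)² / Đᵢⱼ`, so `A_S` is negative semidefinite on all
of `ℝⁿ`. If `A_S w = X^{1/2} g`, then `⟨w, X^{1/2} g⟩ = ⟨w, A_S w⟩ ≤ 0`, and since `X^{1/2}` is
symmetric, `⟨J, g⟩ = (RT)⁻¹ ⟨w, X^{1/2} g⟩ ≤ 0`.
-/

open Finset Matrix

section

variable {ι K : Type*} [Fintype ι] [DecidableEq ι]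

/-- With `a = √x` and `c = Đ⁻¹` this is `A_S`. The `k = i` term of the diagonal sum cancels
`a i * a i * c i i`, so the diagonal value `c i i` plays no role. -/
def symmMaxwellStefan [CommRing K] (a : ι → K) (c : ι → ι → K) : Matrix ι ι K :=
  Matrix.of (fun i j => a i * a j * c i j) - Matrix.diagonal (fun i => ∑ k, c i k * a k ^ 2)

theorem two_mul_dotProduct_symmMaxwellStefan_mulVec [CommRing K] {c : ι → ι → K}
    (hc : ∀ i j, c i j = c j i) (a w : ι → K) :
    2 * (w ⬝ᵥ symmMaxwellStefan a c *ᵥ w) =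
      -∑ i, ∑ j, c i j * (a j * w i - a i * w j) ^ 2 := by
  have hswap : ∑ i, ∑ j, c i j * (a i ^ 2 * w j ^ 2) =
      ∑ i, ∑ j, c i j * (a j ^ 2 * w i ^ 2) := by
    rw [Finset.sum_comm]
    exact sum_congr rfl fun i _ => sum_congr rfl fun j _ => by rw [hc]
  have hexpand : ∑ i, ∑ j, c i j * (a j * w i - a i * w j) ^ 2 =
      ∑ i, ∑ j, c i j * (a j ^ 2 * w i ^ 2) + ∑ i, ∑ j, c i j * (a i ^ 2 * w j ^ 2)
        - 2 * ∑ i, ∑ j, w i * (a i * a j * c i j * w j) := by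
    simp only [mul_sum, ← sum_add_distrib, ← sum_sub_distrib]
    exact sum_congr rfl fun i _ => sum_congr rfl fun j _ => by ring
  have hoff : w ⬝ᵥ (Matrix.of fun i j => a i * a j * c i j) *ᵥ w =
      ∑ i, ∑ j, w i * (a i * a j * c i j * w j) := by
    simp only [dotProduct, mulVec, of_apply, mul_sum]
  have hdiag : w ⬝ᵥ diagonal (fun i => ∑ k, c i k * a k ^ 2) *ᵥ w =
      ∑ i, ∑ j, c i j * (a j ^ 2 * w i ^ 2) := by
    simp only [dotProduct, mulVec_diagonal, sum_mul, mul_sum]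
    exact sum_congr rfl fun i _ => sum_congr rfl fun j _ => by ring
  rw [hexpand, hswap, symmMaxwellStefan, sub_mulVec, dotProduct_sub, hoff, hdiag]
  ring

theorem dotProduct_symmMaxwellStefan_mulVec_nonpos [CommRing K] [LinearOrder K]
    [IsStrictOrderedRing K] {c : ι → ι → K} (hc : ∀ i j, c i j = c j i)
    (hc_nonneg : ∀ i j, i ≠ j → 0 ≤ c i j) (a w : ι → K) :
    w ⬝ᵥ symmMaxwellStefan a c *ᵥ w ≤ 0 := by
  have hsum : 0 ≤ ∑ i, ∑ j, c i j * (a j * w i - a i * w j) ^ 2 := by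
    refine sum_nonneg fun i _ => sum_nonneg fun j _ => ?_
    rcases eq_or_ne i j with rfl | hij
    · simp
    · exact mul_nonneg (hc_nonneg i j hij) (sq_nonneg _)
  have := two_mul_dotProduct_symmMaxwellStefan_mulVec hc a w
  linarith

theorem symmMaxwellStefan_sqrt_apply {x : ι → ℝ} (hx : ∀ i, 0 ≤ x i) (D : ι → ι → ℝ)
    (i j : ι) :
    symmMaxwellStefan (fun i => √(x i)) (fun i j => (D i j)⁻¹) i j =
      if i = j then -(∑ k ∈ univ.erase i, x k / D i k) else √(x i * x j) / D i j := by
  simp only [symmMaxwellStefan, Matrix.sub_apply, of_apply, diagonal_apply,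
    Real.sq_sqrt (hx _)]
  split_ifs with hij
  · subst hij
    rw [← add_sum_erase _ _ (mem_univ i), Real.mul_self_sqrt (hx i)]
    simp only [div_eq_inv_mul]
    ring
  · rw [Real.sqrt_mul (hx i), sub_zero, div_eq_mul_inv]

end

theorem MS_entropy_inequality_general
    (n : ℕ)
    (R T : ℝ) (hR : 0 < R) (hT : 0 < T)
    (D : Fin n → Fin n → ℝ)
    (hDpos : ∀ i j, i ≠ j → 0 < D i j)
    (hDsymm : ∀ i j, D i j = D j i)
    (x : Fin n → ℝ) (hx : ∀ i, 0 < x i)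
    (AS : Matrix (Fin n) (Fin n) ℝ)
    (hAS : ∀ i j, AS i j =
      if i = j then -(∑ k ∈ Finset.univ.erase i, x k / D i k)
      else Real.sqrt (x i * x j) / D i j)
    (X12 : Matrix (Fin n) (Fin n) ℝ)
    (hX12 : X12 = Matrix.diagonal fun i => Real.sqrt (x i))
    (g : Fin n → ℝ)
    (w : Fin n → ℝ)
    (hw : AS.mulVec w = X12.mulVec g)  -- w = (A_S|Ê)^{-1} X^{1/2} g
    (J : Fin n → ℝ)
    (hJ : J = (R * T)⁻¹ • X12.mulVec w) :
    0 ≤ -(dotProduct J g)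
    ∧ 0 ≤ dotProduct (-w) (X12.mulVec g) := by
  have hAS_eq : AS = symmMaxwellStefan (fun i => √(x i)) (fun i j => (D i j)⁻¹) :=
    Matrix.ext fun i j => by rw [hAS, symmMaxwellStefan_sqrt_apply (fun i => (hx i).le)]
  have hwg : w ⬝ᵥ X12 *ᵥ g ≤ 0 := by
    rw [← hw, hAS_eq]
    exact dotProduct_symmMaxwellStefan_mulVec_nonpos (fun i j => by rw [hDsymm])
      (fun i j hij => (inv_pos.mpr (hDpos i j hij)).le) _ w
  have hJg : J ⬝ᵥ g = (R * T)⁻¹ * (w ⬝ᵥ X12 *ᵥ g) := by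
    have hX12_symm : X12ᵀ = X12 := by rw [hX12, diagonal_transpose]
    rw [hJ, smul_dotProduct, smul_eq_mul, dotProduct_comm, ← dotProduct_transpose_mulVec,
      hX12_symm]
  rw [neg_dotProduct, hJg, ← mul_neg]
  exact ⟨mul_nonneg (by positivity) (neg_nonneg.mpr hwg), neg_nonneg.mpr hwg⟩

theorem MS_entropy_inequality
    (n : ℕ) (hn : 2 ≤ n)
    (R T : ℝ) (hR : 0 < R) (hT : 0 < T)
    (D : Fin n → Fin n → ℝ)
    (hDpos : ∀ i j, i ≠ j → 0 < D i j)
    (hDsymm : ∀ i j, D i j = D j i)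
    (x : Fin n → ℝ) (hx : ∀ i, 0 < x i) (hxsum : ∑ i, x i = 1)
    (AS : Matrix (Fin n) (Fin n) ℝ)
    (hAS : ∀ i j, AS i j =
      if i = j then -(∑ k ∈ Finset.univ.erase i, x k / D i k)
      else Real.sqrt (x i * x j) / D i j)
    (X12 : Matrix (Fin n) (Fin n) ℝ)
    (hX12 : X12 = Matrix.diagonal fun i => Real.sqrt (x i))
    (g : Fin n → ℝ) (hg : ∑ i, x i * g i = 0)  -- X^{1/2} g ∈ Ê
    (w : Fin n → ℝ)
    (hwE : dotProduct w (fun i => Real.sqrt (x i)) = 0)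
    (hw : AS.mulVec w = X12.mulVec g)  -- w = (A_S|Ê)^{-1} X^{1/2} g
    (J : Fin n → ℝ)
    (hJ : J = (R * T)⁻¹ • X12.mulVec w) :
    0 ≤ -(dotProduct J g)
    ∧ 0 ≤ dotProduct (-w) (X12.mulVec g) :=
  MS_entropy_inequality_general n R T hR hT D hDpos hDsymm x hx AS hAS X12 hX12 g w hw J hJ
end
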